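/- arXiv:1308.1747 — 6 statements merged into one kernel-verified Lean document; each statement's English description precedes it below -/
import Mathlib

section
/- Consider the disturbance-free closed loop under the baseline algorithm: let {B(k)}_{k∈ℕ} be an i.i.d. sequence of Bernoulli random variables with P(B(k)=1)=p₀ ∈ [0,1), independent of the initial state x(0), and define x(k+1) = f(x(k),0,0) if B(k)=1 and x(k+1) = f(x(k),κ(x(k)),0) if B(k)=0. If p₀·α + (1−p₀)·ρ < 1, then the closed loop is stochastically stable; in particular ∑_{k=0}^∞ E[φ₁(|x(k)|)] < ∞. -/
open MeasureTheory ProbabilityTheory Filter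

open scoped ENNReal

/-!
Along the closed loop, `W k := V (x k)` obeys the random multiplicative recursion
`W (k+1) ≤ g (B k) * W k` with `g true = α`, `g false = ρ`, so `W k ≤ (∏ i < k, g (B i)) * W 0`.
Since the `B i` are i.i.d. and independent of `x 0`, the expectation of this product factorizes
as `λ ^ k * E[V (x 0)]` with `λ = p₀ α + (1 - p₀) ρ < 1`, so `∑ k, E[V (x k)]` is bounded by a
geometric series. The sandwich `φ₁ ‖x‖ ≤ V x ≤ φ₂ ‖x‖` gives `E[φ₁ ‖x k‖] ≤ E[V (x k)]` and
`E[V (x 0)] ≤ E[φ₂ ‖x 0‖] < ∞`.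
-/

section RandomMultiplicativeRecursion

variable {Ω β γ : Type*} {B : ℕ → Ω → β} {X₀ : Ω → γ} {g : β → ℝ≥0∞} {h : γ → ℝ≥0∞}
  {W : ℕ → Ω → ℝ≥0∞}

theorem le_prod_mul_of_le_mul (hW₀ : ∀ ω, W 0 ω ≤ h (X₀ ω))
    (hW : ∀ k ω, W (k + 1) ω ≤ g (B k ω) * W k ω) (k : ℕ) (ω : Ω) :
    W k ω ≤ (∏ i ∈ Finset.range k, g (B i ω)) * h (X₀ ω) := by
  induction k with
  | zero => simpa using hW₀ ω
  | succ k ih =>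
    calc W (k + 1) ω ≤ g (B k ω) * W k ω := hW k ω
      _ ≤ g (B k ω) * ((∏ i ∈ Finset.range k, g (B i ω)) * h (X₀ ω)) := by gcongr
      _ = (∏ i ∈ Finset.range (k + 1), g (B i ω)) * h (X₀ ω) := by
        rw [Finset.prod_range_succ]; ring

variable [MeasurableSpace Ω] [MeasurableSpace β] [MeasurableSpace γ] {μ : Measure Ω}

theorem lintegral_le_prod_mul_of_le_mul (hB : ∀ i, Measurable (B i)) (hX₀ : Measurable X₀)
    (hiid : iIndepFun B μ) (hX₀B : IndepFun X₀ (fun ω i => B i ω) μ)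
    (hg : Measurable g) (hh : Measurable h) (hW₀ : ∀ ω, W 0 ω ≤ h (X₀ ω))
    (hW : ∀ k ω, W (k + 1) ω ≤ g (B k ω) * W k ω) (k : ℕ) :
    ∫⁻ ω, W k ω ∂μ ≤ (∏ i ∈ Finset.range k, ∫⁻ ω, g (B i ω) ∂μ) * ∫⁻ ω, h (X₀ ω) ∂μ := by
  have hG : Measurable fun b : ℕ → β => ∏ i ∈ Finset.range k, g (b i) :=
    Finset.measurable_prod _ fun i _ => hg.comp (measurable_pi_apply i)
  calc ∫⁻ ω, W k ω ∂μ ≤ ∫⁻ ω, (∏ i ∈ Finset.range k, g (B i ω)) * h (X₀ ω) ∂μ :=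
        lintegral_mono (le_prod_mul_of_le_mul hW₀ hW k)
    _ = (∫⁻ ω, ∏ i ∈ Finset.range k, g (B i ω) ∂μ) * ∫⁻ ω, h (X₀ ω) ∂μ :=
        lintegral_mul_eq_lintegral_mul_lintegral_of_indepFun''
          (hG.comp (measurable_pi_lambda _ hB)).aemeasurable (hh.comp hX₀).aemeasurable
          (hX₀B.comp hh hG).symm
    _ = (∏ i ∈ Finset.range k, ∫⁻ ω, g (B i ω) ∂μ) * ∫⁻ ω, h (X₀ ω) ∂μ := by
        congr 1
        exact lintegral_prod_eq_prod_lintegral_of_indepFun _ (fun i => g ∘ B i)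
          (hiid.comp (fun _ => g) fun _ => hg) fun i => hg.comp (hB i)

theorem tsum_lintegral_lt_top_of_le_mul (hB : ∀ i, Measurable (B i)) (hX₀ : Measurable X₀)
    (hiid : iIndepFun B μ) (hX₀B : IndepFun X₀ (fun ω i => B i ω) μ)
    (hg : Measurable g) (hh : Measurable h) {c : ℝ≥0∞}
    (hgc : ∀ i, ∫⁻ ω, g (B i ω) ∂μ = c) (hc : c < 1) (hh_fin : ∫⁻ ω, h (X₀ ω) ∂μ < ∞)
    (hW₀ : ∀ ω, W 0 ω ≤ h (X₀ ω)) (hW : ∀ k ω, W (k + 1) ω ≤ g (B k ω) * W k ω) :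
    ∑' k, ∫⁻ ω, W k ω ∂μ < ∞ := by
  calc ∑' k, ∫⁻ ω, W k ω ∂μ ≤ ∑' k, c ^ k * ∫⁻ ω, h (X₀ ω) ∂μ := by
        refine ENNReal.tsum_le_tsum fun k => ?_
        simpa [hgc] using lintegral_le_prod_mul_of_le_mul hB hX₀ hiid hX₀B hg hh hW₀ hW k
    _ = (1 - c)⁻¹ * ∫⁻ ω, h (X₀ ω) ∂μ := by rw [ENNReal.tsum_mul_right, ENNReal.tsum_geometric]
    _ < ∞ := ENNReal.mul_lt_top (by simpa using hc) hh_fin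

end RandomMultiplicativeRecursion

theorem lintegral_comp_bool {Ω : Type*} [MeasurableSpace Ω] {μ : Measure Ω}
    [IsProbabilityMeasure μ] {b : Ω → Bool} (hb : Measurable b) (g : Bool → ℝ≥0∞) :
    ∫⁻ ω, g (b ω) ∂μ = μ {ω | b ω = true} * g true + (1 - μ {ω | b ω = true}) * g false := by
  have htrue : MeasurableSet {ω | b ω = true} := hb (measurableSet_singleton true)
  have hfalse : b ⁻¹' {false} = {ω | b ω = true}ᶜ := by ext; simp
  rw [← lintegral_map (measurable_of_countable g) hb, lintegral_fintype, Fintype.sum_bool,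
    Measure.map_apply hb (measurableSet_singleton _),
    Measure.map_apply hb (measurableSet_singleton _), hfalse,
    prob_compl_eq_one_sub htrue]
  exact congrArg₂ (· + ·) (mul_comm _ _) (mul_comm _ _)

theorem stmt_0_general
    {n p m : ℕ}
    (f : EuclideanSpace ℝ (Fin n) → EuclideanSpace ℝ (Fin p) → EuclideanSpace ℝ (Fin m) →
      EuclideanSpace ℝ (Fin n))
    (V : EuclideanSpace ℝ (Fin n) → ℝ) (hVmeas : Measurable V)
    (κ : EuclideanSpace ℝ (Fin n) → EuclideanSpace ℝ (Fin p))
    -- Assumption 1: class-K∞ bounds and closed-loop contraction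
    (φ₁ φ₂ : ℝ → ℝ)
    (ρ : ℝ) (hρ0 : 0 ≤ ρ)
    (hsandwich : ∀ x, φ₁ ‖x‖ ≤ V x ∧ V x ≤ φ₂ ‖x‖)
    (hcontract : ∀ x, V (f x (κ x) 0) ≤ ρ * V x)
    -- Assumption 3: open-loop growth bound with α ∈ [1, 1/p₀)
    (p₀ : ℝ) (hp₀0 : 0 ≤ p₀) (hp₀1 : p₀ < 1)
    (α : ℝ) (hα1 : 1 ≤ α)
    (hgrow : ∀ x, V (f x 0 0) ≤ α * V x)
    -- probability space, i.i.d. Bernoulli availability, initial state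
    {Ω : Type*} [MeasurableSpace Ω] (μ : Measure Ω) [IsProbabilityMeasure μ]
    (B : ℕ → Ω → Bool) (hBmeas : ∀ k, Measurable (B k))
    (hBdist : ∀ k, μ {ω | B k ω = true} = ENNReal.ofReal p₀)
    (hBiid : iIndepFun B μ)
    (x0 : Ω → EuclideanSpace ℝ (Fin n)) (hx0meas : Measurable x0)
    (hBx0indep : IndepFun x0 (fun ω k => B k ω) μ)
    (hx0int : ∫⁻ ω, ENNReal.ofReal (φ₂ ‖x0 ω‖) ∂μ < ⊤)
    -- the closed-loop trajectory
    (x : ℕ → Ω → EuclideanSpace ℝ (Fin n))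
    (hxinit : ∀ ω, x 0 ω = x0 ω)
    (hxrec : ∀ k ω, x (k + 1) ω =
      if B k ω = true then f (x k ω) 0 0 else f (x k ω) (κ (x k ω)) 0)
    -- stability condition
    (hstab : p₀ * α + (1 - p₀) * ρ < 1) :
    ∑' k : ℕ, ∫⁻ ω, ENNReal.ofReal (φ₁ ‖x k ω‖) ∂μ < ⊤ := by
  set g : Bool → ℝ≥0∞ := fun b => if b then ENNReal.ofReal α else ENNReal.ofReal ρ
  set Vₑ : EuclideanSpace ℝ (Fin n) → ℝ≥0∞ := fun v => ENNReal.ofReal (V v)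
  have hmean : ∀ i, ∫⁻ ω, g (B i ω) ∂μ = ENNReal.ofReal (p₀ * α + (1 - p₀) * ρ) := by
    intro i
    rw [lintegral_comp_bool (hBmeas i), hBdist i, ENNReal.ofReal_add (by positivity)
      (mul_nonneg (by linarith) hρ0), ENNReal.ofReal_mul hp₀0, ENNReal.ofReal_mul (by linarith),
      ENNReal.ofReal_sub _ hp₀0, ENNReal.ofReal_one]
    rfl
  have hstep : ∀ k ω, Vₑ (x (k + 1) ω) ≤ g (B k ω) * Vₑ (x k ω) := by
    intro k ω
    rw [hxrec k ω]
    cases B k ω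
    · simpa [g, Vₑ, ENNReal.ofReal_mul hρ0] using ENNReal.ofReal_le_ofReal (hcontract (x k ω))
    · simpa [g, Vₑ, ENNReal.ofReal_mul (by linarith : 0 ≤ α)] using
        ENNReal.ofReal_le_ofReal (hgrow (x k ω))
  have hVx0_fin : ∫⁻ ω, Vₑ (x0 ω) ∂μ < ⊤ :=
    (lintegral_mono fun ω => ENNReal.ofReal_le_ofReal (hsandwich (x0 ω)).2).trans_lt hx0int
  calc ∑' k, ∫⁻ ω, ENNReal.ofReal (φ₁ ‖x k ω‖) ∂μ ≤ ∑' k, ∫⁻ ω, Vₑ (x k ω) ∂μ :=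
        ENNReal.tsum_le_tsum fun k =>
          lintegral_mono fun ω => ENNReal.ofReal_le_ofReal (hsandwich (x k ω)).1
    _ < ⊤ := tsum_lintegral_lt_top_of_le_mul hBmeas hx0meas hBiid hBx0indep
        (measurable_of_countable g) (ENNReal.measurable_ofReal.comp hVmeas) hmean
        (ENNReal.ofReal_lt_one.2 hstab) hVx0_fin (fun ω => by rw [hxinit]; rfl) hstep

/-- Stochastic stability of the baseline algorithm with i.i.d. availability
(Theorem 1). The disturbance-free closed loop `x(k+1) = f(x(k),0,0)` if `B(k)=1` (processor
unavailable, probability `p₀`) and `x(k+1) = f(x(k),κ(x(k)),0)` otherwise, with `{B(k)}`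
i.i.d. Bernoulli independent of `x(0)`, is stochastically stable whenever
`p₀α + (1−p₀)ρ < 1`; in particular `∑_{k=0}^∞ E[φ₁(|x(k)|)] < ∞`. -/
theorem stmt_0
    {n p m : ℕ}
    (f : EuclideanSpace ℝ (Fin n) → EuclideanSpace ℝ (Fin p) → EuclideanSpace ℝ (Fin m) →
      EuclideanSpace ℝ (Fin n))
    (hfmeas : Measurable fun q : EuclideanSpace ℝ (Fin n) × EuclideanSpace ℝ (Fin p) ×
      EuclideanSpace ℝ (Fin m) => f q.1 q.2.1 q.2.2)
    (hf0 : f 0 0 0 = 0)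
    (V : EuclideanSpace ℝ (Fin n) → ℝ) (hVmeas : Measurable V) (hVnonneg : ∀ x, 0 ≤ V x)
    (κ : EuclideanSpace ℝ (Fin n) → EuclideanSpace ℝ (Fin p)) (hκmeas : Measurable κ)
    -- Assumption 1: class-K∞ bounds and closed-loop contraction
    (φ₁ φ₂ : ℝ → ℝ)
    (hφ₁K : Continuous φ₁ ∧ φ₁ 0 = 0 ∧ StrictMonoOn φ₁ (Set.Ici 0) ∧ Tendsto φ₁ atTop atTop)
    (hφ₂K : Continuous φ₂ ∧ φ₂ 0 = 0 ∧ StrictMonoOn φ₂ (Set.Ici 0) ∧ Tendsto φ₂ atTop atTop)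
    (ρ : ℝ) (hρ0 : 0 ≤ ρ) (hρ1 : ρ < 1)
    (hsandwich : ∀ x, φ₁ ‖x‖ ≤ V x ∧ V x ≤ φ₂ ‖x‖)
    (hcontract : ∀ x, V (f x (κ x) 0) ≤ ρ * V x)
    -- Assumption 3: open-loop growth bound with α ∈ [1, 1/p₀)
    (p₀ : ℝ) (hp₀0 : 0 ≤ p₀) (hp₀1 : p₀ < 1)
    (α : ℝ) (hα1 : 1 ≤ α) (hαp : p₀ * α < 1)
    (hgrow : ∀ x, V (f x 0 0) ≤ α * V x)
    -- probability space, i.i.d. Bernoulli availability, initial state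
    {Ω : Type*} [MeasurableSpace Ω] (μ : Measure Ω) [IsProbabilityMeasure μ]
    (B : ℕ → Ω → Bool) (hBmeas : ∀ k, Measurable (B k))
    (hBdist : ∀ k, μ {ω | B k ω = true} = ENNReal.ofReal p₀)
    (hBiid : iIndepFun B μ)
    (x0 : Ω → EuclideanSpace ℝ (Fin n)) (hx0meas : Measurable x0)
    (hBx0indep : IndepFun x0 (fun ω k => B k ω) μ)
    (hx0int : ∫⁻ ω, ENNReal.ofReal (φ₂ ‖x0 ω‖) ∂μ < ⊤)
    -- the closed-loop trajectory
    (x : ℕ → Ω → EuclideanSpace ℝ (Fin n))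
    (hxinit : ∀ ω, x 0 ω = x0 ω)
    (hxrec : ∀ k ω, x (k + 1) ω =
      if B k ω = true then f (x k ω) 0 0 else f (x k ω) (κ (x k ω)) 0)
    -- stability condition
    (hstab : p₀ * α + (1 - p₀) * ρ < 1) :
    ∑' k : ℕ, ∫⁻ ω, ENNReal.ofReal (φ₁ ‖x k ω‖) ∂μ < ⊤ :=
  stmt_0_general f V hVmeas κ φ₁ φ₂ ρ hρ0 hsandwich hcontract p₀ hp₀0 hp₀1 α hα1 hgrow μ B hBmeas
    hBdist hBiid x0 hx0meas hBx0indep hx0int x hxinit hxrec hstab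
end

section
/- Let Δ and N be independent random variables where Δ has distribution P(Δ = j) = (1−p₀)·p₀^{j−1} for j ≥ 1 and N takes values in {1,…,Λ} with P(N = l) = p_l/(1−p₀). Suppose ρ ∈ (0,1), α ≥ 1, and p₀·α < 1. Then E[ρ^{min(N,Δ)}·α^{max(Δ−N,0)}] = ∑_{l=1}^{Λ} p_l·Ω_l, where Ω_l := ρ·(1−(p₀ρ)^l)/(1−p₀ρ) + α·(p₀ρ)^l/(1−p₀α). Consequently, for any random variable X⁺ and any χ ∈ ℝⁿ with V(X⁺) ≤ ρ^{min(N,Δ)}·α^{max(Δ−N,0)}·V(χ) almost surely, E[V(X⁺)] ≤ (∑_{l=1}^{Λ} p_l·Ω_l)·V(χ). -/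
/-!
Conditioning on `N = l` (independence), `E[ρ^{min(l,Δ)} α^{(Δ-l)⁺}]` is
`(1 - p₀) ∑_{j ≥ 0} p₀^j ρ^{min(l,j+1)} α^{(j+1-l)⁺}`. The first `l` terms form a geometric
series of ratio `p₀ρ` and the remaining ones a geometric series of ratio `p₀α`, whose sum is
`(1 - p₀) Ω_l`; weighting by `P(N = l) = p_l / (1 - p₀)` gives the expectation. The bound on
`E[V(X⁺)]` then follows by monotonicity of the integral.
-/

open MeasureTheory ProbabilityTheory

/-- The paper's `Ω_l`. -/
noncomputable def interArrivalGain (p₀ ρ α : ℝ) (l : ℕ) : ℝ :=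
  ρ * (1 - (p₀ * ρ) ^ l) / (1 - p₀ * ρ) + α * (p₀ * ρ) ^ l / (1 - p₀ * α)

theorem hasSum_interArrivalGain {p₀ ρ α : ℝ} (hρ : p₀ * ρ ≠ 1) (hα : |p₀ * α| < 1) (l : ℕ) :
    HasSum (fun j : ℕ => ρ ^ min l (j + 1) * α ^ (j + 1 - l) * p₀ ^ j)
      (interArrivalGain p₀ ρ α l) := by
  have head : ∑ j ∈ Finset.range l, ρ ^ min l (j + 1) * α ^ (j + 1 - l) * p₀ ^ j
      = ρ * (1 - (p₀ * ρ) ^ l) / (1 - p₀ * ρ) := by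
    have hterm : ∀ j ∈ Finset.range l,
        ρ ^ min l (j + 1) * α ^ (j + 1 - l) * p₀ ^ j = ρ * (p₀ * ρ) ^ j := by
      intro j hj
      have hjl : j + 1 ≤ l := Finset.mem_range.1 hj
      rw [min_eq_right hjl, Nat.sub_eq_zero_of_le hjl, mul_pow]
      ring
    rw [Finset.sum_congr rfl hterm, ← Finset.mul_sum, geom_sum_eq hρ, mul_div_assoc,
      ← neg_div_neg_eq, neg_sub, neg_sub]
  have tail : (fun j => ρ ^ min l (j + l + 1) * α ^ (j + l + 1 - l) * p₀ ^ (j + l))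
      = fun j => α * (p₀ * ρ) ^ l * (p₀ * α) ^ j := by
    funext j
    rw [min_eq_left (by omega), show j + l + 1 - l = j + 1 by omega]
    ring
  rw [← hasSum_nat_add_iff' l, interArrivalGain, head, add_sub_cancel_left, tail, div_eq_mul_inv]
  exact (hasSum_geometric_of_abs_lt_one hα).mul_left _

section

variable {Ω : Type*} [MeasurableSpace Ω] {μ : Measure Ω}

theorem lintegral_comp_eq_tsum_of_indepFun {α β : Type*} [MeasurableSpace α] [MeasurableSpace β]
    [Countable α] [Countable β] [MeasurableSingletonClass α] [MeasurableSingletonClass β]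
    [IsFiniteMeasure μ] {X : Ω → α} {Y : Ω → β} (hX : Measurable X) (hY : Measurable Y)
    (hXY : IndepFun X Y μ) (F : α → β → ENNReal) :
    ∫⁻ ω, F (X ω) (Y ω) ∂μ = ∑' x, μ {ω | X ω = x} * ∫⁻ ω, F x (Y ω) ∂μ := by
  change ∫⁻ ω, Function.uncurry F (X ω, Y ω) ∂μ = _
  rw [← lintegral_map (measurable_of_countable _) (hX.prodMk hY),
    hXY.map_prod_eq_prod_map_map hX.aemeasurable hY.aemeasurable,
    lintegral_prod _ (measurable_of_countable _).aemeasurable, lintegral_countable']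
  refine tsum_congr fun x => ?_
  rw [Measure.map_apply hX (measurableSet_singleton x), mul_comm,
    lintegral_map (measurable_of_countable _) hY]
  rfl

theorem measure_preimage_zero_eq_zero_of_tsum_succ [IsProbabilityMeasure μ] {X : Ω → ℕ}
    (hX : Measurable X) (h : ∑' j, μ (X ⁻¹' {j + 1}) = 1) : μ (X ⁻¹' {0}) = 0 := by
  have hunion : ⋃ j, X ⁻¹' {j + 1} = (X ⁻¹' {0})ᶜ := by
    ext ω
    simp [Nat.exists_eq_add_one, Nat.pos_iff_ne_zero]
  rw [← prob_compl_eq_one_iff (hX (measurableSet_singleton 0)), ← h, ← hunion,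
    measure_iUnion (fun i j hij => (Set.disjoint_singleton.2 (by omega)).preimage X)
      fun j => hX (measurableSet_singleton _)]

theorem lintegral_ofReal_comp_of_geometric [IsProbabilityMeasure μ] {Δ : Ω → ℕ} {p₀ : ℝ}
    (hΔ : Measurable Δ) (hp₀0 : 0 ≤ p₀) (hp₀1 : p₀ < 1)
    (hΔdist : ∀ j : ℕ, 1 ≤ j → μ {ω | Δ ω = j} = ENNReal.ofReal ((1 - p₀) * p₀ ^ (j - 1)))
    {f : ℕ → ℝ} (hf : ∀ j, 0 ≤ f j) {s : ℝ} (hs : HasSum (fun j => f (j + 1) * p₀ ^ j) s) :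
    ∫⁻ ω, ENNReal.ofReal (f (Δ ω)) ∂μ = ENNReal.ofReal ((1 - p₀) * s) := by
  have hsucc (j : ℕ) : μ (Δ ⁻¹' {j + 1}) = ENNReal.ofReal ((1 - p₀) * p₀ ^ j) := by
    rw [← Nat.add_sub_cancel j 1]
    exact hΔdist (j + 1) j.succ_pos
  have hgeom : HasSum (fun j => (1 - p₀) * p₀ ^ j) 1 := by
    simpa [mul_inv_cancel₀ (sub_ne_zero.2 hp₀1.ne')] using
      (hasSum_geometric_of_lt_one hp₀0 hp₀1).mul_left (1 - p₀)
  have hzero : μ (Δ ⁻¹' {0}) = 0 := by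
    refine measure_preimage_zero_eq_zero_of_tsum_succ hΔ ?_
    simp_rw [hsucc]
    rw [← ENNReal.ofReal_tsum_of_nonneg
      (fun j => mul_nonneg (sub_nonneg.2 hp₀1.le) (pow_nonneg hp₀0 _)) hgeom.summable,
      hgeom.tsum_eq, ENNReal.ofReal_one]
  have hterms := hs.mul_left (1 - p₀)
  rw [← lintegral_map (f := fun j => ENNReal.ofReal (f j)) (measurable_of_countable _) hΔ,
    lintegral_countable', tsum_eq_zero_add' ENNReal.summable]
  simp_rw [Measure.map_apply hΔ (measurableSet_singleton _), hzero, mul_zero, zero_add, hsucc,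
    ← ENNReal.ofReal_mul (hf _)]
  rw [← hterms.tsum_eq, ENNReal.ofReal_tsum_of_nonneg _ hterms.summable]
  · exact tsum_congr fun j => congrArg ENNReal.ofReal (by ring)
  · exact fun j => mul_nonneg (sub_nonneg.2 hp₀1.le) (mul_nonneg (hf _) (pow_nonneg hp₀0 _))

theorem lintegral_ofReal_le_of_ae_le_mul {f g : Ω → ℝ} {c : ℝ} (hg : ∀ ω, 0 ≤ g ω)
    (h : ∀ᵐ ω ∂μ, f ω ≤ g ω * c) :
    ∫⁻ ω, ENNReal.ofReal (f ω) ∂μ ≤ (∫⁻ ω, ENNReal.ofReal (g ω) ∂μ) * ENNReal.ofReal c := by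
  rw [← lintegral_mul_const' _ _ ENNReal.ofReal_ne_top]
  refine lintegral_mono_ae (h.mono fun ω hω => ?_)
  rw [← ENNReal.ofReal_mul (hg ω)]
  exact ENNReal.ofReal_le_ofReal hω

end

theorem stmt_5_general
    {n : ℕ} {Ω : Type*} [MeasurableSpace Ω] (μ : Measure Ω) [IsProbabilityMeasure μ]
    (p₀ ρ α : ℝ) (Λ : ℕ) (p : ℕ → ℝ)
    (hp₀0 : 0 ≤ p₀) (hp₀1 : p₀ < 1) (hρ0 : 0 < ρ) (hρ1 : ρ < 1)
    (hα : 1 ≤ α) (hpα : p₀ * α < 1)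
    (hp : ∀ l ∈ Finset.Icc 1 Λ, 0 ≤ p l)
    (Δ N : Ω → ℕ) (hΔmeas : Measurable Δ) (hNmeas : Measurable N)
    (hindep : IndepFun Δ N μ)
    (hΔdist : ∀ j : ℕ, 1 ≤ j → μ {ω | Δ ω = j} = ENNReal.ofReal ((1 - p₀) * p₀ ^ (j - 1)))
    (hNval : ∀ ω, 1 ≤ N ω ∧ N ω ≤ Λ)
    (hNdist : ∀ l ∈ Finset.Icc 1 Λ, μ {ω | N ω = l} = ENNReal.ofReal (p l / (1 - p₀)))
    (V : EuclideanSpace ℝ (Fin n) → ℝ) (hV : ∀ x, 0 ≤ V x) :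
    (∫⁻ ω, ENNReal.ofReal (ρ ^ min (N ω) (Δ ω) * α ^ (Δ ω - N ω)) ∂μ
        = ENNReal.ofReal (∑ l ∈ Finset.Icc 1 Λ, p l *
            (ρ * (1 - (p₀ * ρ) ^ l) / (1 - p₀ * ρ) + α * (p₀ * ρ) ^ l / (1 - p₀ * α)))) ∧
    (∀ (Xplus : Ω → EuclideanSpace ℝ (Fin n)) (χ : EuclideanSpace ℝ (Fin n)),
      (∀ᵐ ω ∂μ, V (Xplus ω) ≤ ρ ^ min (N ω) (Δ ω) * α ^ (Δ ω - N ω) * V χ) →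
      ∫⁻ ω, ENNReal.ofReal (V (Xplus ω)) ∂μ
        ≤ ENNReal.ofReal ((∑ l ∈ Finset.Icc 1 Λ, p l *
            (ρ * (1 - (p₀ * ρ) ^ l) / (1 - p₀ * ρ) + α * (p₀ * ρ) ^ l / (1 - p₀ * α))) * V χ)) := by
  have hp₀ρ : p₀ * ρ ≠ 1 := ((mul_le_mul_of_nonneg_left (hρ1.le.trans hα) hp₀0).trans_lt hpα).ne
  have hp₀α : |p₀ * α| < 1 := abs_lt.2 ⟨neg_one_lt_zero.trans_le (by positivity), hpα⟩
  have hgain (l : ℕ) := hasSum_interArrivalGain hp₀ρ hp₀α l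
  have hmean : ∫⁻ ω, ENNReal.ofReal (ρ ^ min (N ω) (Δ ω) * α ^ (Δ ω - N ω)) ∂μ
      = ENNReal.ofReal (∑ l ∈ Finset.Icc 1 Λ, p l * interArrivalGain p₀ ρ α l) := by
    rw [lintegral_comp_eq_tsum_of_indepFun hNmeas hΔmeas hindep.symm
        (fun l j => ENNReal.ofReal (ρ ^ min l j * α ^ (j - l))),
      tsum_eq_sum (s := Finset.Icc 1 Λ) fun l hl => ?_, ENNReal.ofReal_sum_of_nonneg]
    · refine Finset.sum_congr rfl fun l hl => ?_
      rw [lintegral_ofReal_comp_of_geometric (f := fun j => ρ ^ min l j * α ^ (j - l)) hΔmeas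
        hp₀0 hp₀1 hΔdist (fun j => by positivity) (hgain l), hNdist l hl,
        ← ENNReal.ofReal_mul (div_nonneg (hp l hl) (by linarith)), ← mul_assoc,
        div_mul_cancel₀ _ (sub_ne_zero.2 hp₀1.ne')]
    · exact fun l hl => mul_nonneg (hp l hl) ((hgain l).nonneg fun j => by positivity)
    · have hempty : {ω | N ω = l} = ∅ :=
        Set.eq_empty_of_forall_notMem fun ω (hω : N ω = l) =>
          hl (hω ▸ Finset.mem_Icc.2 (hNval ω))
      rw [hempty, measure_empty, zero_mul]
  refine ⟨hmean, fun Xplus χ hbound => ?_⟩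
  calc ∫⁻ ω, ENNReal.ofReal (V (Xplus ω)) ∂μ
      ≤ (∫⁻ ω, ENNReal.ofReal (ρ ^ min (N ω) (Δ ω) * α ^ (Δ ω - N ω)) ∂μ)
          * ENNReal.ofReal (V χ) :=
        lintegral_ofReal_le_of_ae_le_mul (fun ω => by positivity) hbound
    _ = _ := by rw [hmean, ← ENNReal.ofReal_mul' (hV χ)]; rfl

/-- Inter-arrival Lyapunov bound for Algorithm A₁ (Lemma 2).
With `Δ` geometric, `N` on `{1,…,Λ}` with `P(N=l)=p_l/(1−p₀)`, independent, `ρ ∈ (0,1)`,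
`α ≥ 1`, `p₀α < 1`: `E[ρ^{min(N,Δ)} α^{max(Δ−N,0)}] = ∑_{l=1}^{Λ} p_l Ω_l` with
`Ω_l = ρ(1−(p₀ρ)^l)/(1−p₀ρ) + α(p₀ρ)^l/(1−p₀α)`; consequently, if
`V(X⁺) ≤ ρ^{min(N,Δ)} α^{max(Δ−N,0)} V(χ)` a.s., then
`E[V(X⁺)] ≤ (∑_{l=1}^{Λ} p_l Ω_l) V(χ)`. -/
theorem stmt_5
    {n : ℕ} {Ω : Type*} [MeasurableSpace Ω] (μ : Measure Ω) [IsProbabilityMeasure μ]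
    (p₀ ρ α : ℝ) (Λ : ℕ) (p : ℕ → ℝ)
    (hp₀0 : 0 ≤ p₀) (hp₀1 : p₀ < 1) (hρ0 : 0 < ρ) (hρ1 : ρ < 1)
    (hα : 1 ≤ α) (hpα : p₀ * α < 1)
    (hp : ∀ l ∈ Finset.Icc 1 Λ, 0 ≤ p l)
    (hpsum : p₀ + ∑ l ∈ Finset.Icc 1 Λ, p l = 1)
    (Δ N : Ω → ℕ) (hΔmeas : Measurable Δ) (hNmeas : Measurable N)
    (hindep : IndepFun Δ N μ)
    (hΔdist : ∀ j : ℕ, 1 ≤ j → μ {ω | Δ ω = j} = ENNReal.ofReal ((1 - p₀) * p₀ ^ (j - 1)))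
    (hNval : ∀ ω, 1 ≤ N ω ∧ N ω ≤ Λ)
    (hNdist : ∀ l ∈ Finset.Icc 1 Λ, μ {ω | N ω = l} = ENNReal.ofReal (p l / (1 - p₀)))
    (V : EuclideanSpace ℝ (Fin n) → ℝ) (hV : ∀ x, 0 ≤ V x) :
    (∫⁻ ω, ENNReal.ofReal (ρ ^ min (N ω) (Δ ω) * α ^ (Δ ω - N ω)) ∂μ
        = ENNReal.ofReal (∑ l ∈ Finset.Icc 1 Λ, p l *
            (ρ * (1 - (p₀ * ρ) ^ l) / (1 - p₀ * ρ) + α * (p₀ * ρ) ^ l / (1 - p₀ * α)))) ∧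
    (∀ (Xplus : Ω → EuclideanSpace ℝ (Fin n)) (χ : EuclideanSpace ℝ (Fin n)),
      (∀ᵐ ω ∂μ, V (Xplus ω) ≤ ρ ^ min (N ω) (Δ ω) * α ^ (Δ ω - N ω) * V χ) →
      ∫⁻ ω, ENNReal.ofReal (V (Xplus ω)) ∂μ
        ≤ ENNReal.ofReal ((∑ l ∈ Finset.Icc 1 Λ, p l *
            (ρ * (1 - (p₀ * ρ) ^ l) / (1 - p₀ * ρ) + α * (p₀ * ρ) ^ l / (1 - p₀ * α))) * V χ)) :=
  stmt_5_general μ p₀ ρ α Λ p hp₀0 hp₀1 hρ0 hρ1 hα hpα hp Δ N hΔmeas hNmeas hindep hΔdist hNval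
    hNdist V hV
end

section
/- Consider Algorithm A₁ in the disturbance-free case: let N(0) take values in {1,…,Λ} with P(N(0)=l) = p_l/(1−p₀) and let {N(k)}_{k≥1} be i.i.d. on {0,1,…,Λ} with P(N(k)=l) = p_l, all independent of each other and of x(0). Define arrival times k₀ = 0 and k_{i+1} = min{k > k_i : N(k) > 0}, and gaps Δ_i = k_{i+1} − k_i. At each arrival time k_i, tentative controls are generated by the feedback κ along the nominal model: χ₀ = x(k_i), u_j = κ(χ_{j−1}), χ_j = f(χ_{j−1}, u_j, 0) for j = 1,…,N(k_i); the trajectory satisfies x(k_i + ℓ) = χ_ℓ for ℓ ∈ {0,1,…,min(N(k_i),Δ_i)}, and x(k+1) = f(x(k),0,0) for k_i + N(k_i) ≤ k < k_{i+1} when Δ_i > N(k_i). Define σ := (1/(1−p₀ρ))·(ρ·(1−p₀α) + ((α−ρ)/(1−p₀))·∑_{l=1}^{Λ} p_l·(p₀ρ)^l). If p₀·α + (1−p₀)·σ < 1, then the closed loop is stochastically stable: ∑_{k=0}^∞ E[φ₁(|x(k)|)] < ∞. -/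
/-!
Let `b` be the number of precomputed controls still waiting to be applied. The pair `(b, x)`
is a Markov chain driven by the i.i.d. sequence `N`, and the weighted Lyapunov function
`W b * V x` contracts in expectation by a factor `β < 1` at each step: `V` shrinks by `ρ` while
buffered controls are applied and grows at most by `α` otherwise, and the weights `W` balance
the two regimes. Up to a small shift `ε`, the weights are `w b = a + (1 - a) (p₀ ρ) ^ b`, where `a`
makes the closed-loop balance exact; the stability condition then says precisely that the
open-loop regime `b = 0` contracts strictly. Almost surely new controls arrive infinitely often,
so the trajectory of Algorithm A₁ is the `x`-component of this chain, and
`E φ₁ (‖x k‖) ≤ ε⁻¹ β ^ k E (W (N 0) V (x 0))` is summable.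
-/

open MeasureTheory ProbabilityTheory Filter Finset
open scoped ENNReal

section Weights

variable (Λ : ℕ) (p₀ : ℝ) (p : ℕ → ℝ)

def meanNextWeight (W : ℕ → ℝ) (b : ℕ) : ℝ :=
  p₀ * W (b - 1) + ∑ l ∈ Icc 1 Λ, p l * W l

variable {Λ p₀ p}

lemma meanNextWeight_add_const (hpsum : p₀ + ∑ l ∈ Icc 1 Λ, p l = 1) (W : ℕ → ℝ) (ε : ℝ)
    (b : ℕ) :
    meanNextWeight Λ p₀ p (fun b => W b + ε) b = meanNextWeight Λ p₀ p W b + ε := by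
  simp only [meanNextWeight, mul_add, sum_add_distrib, ← sum_mul]
  linear_combination ε * hpsum

lemma stability_condition_iff {ρ α T : ℝ} (hρ0 : 0 ≤ ρ) (hρ1 : ρ < 1) (hp₀1 : p₀ < 1) :
    p₀ * α + (1 - p₀) * ((1 / (1 - p₀ * ρ)) * (ρ * (1 - p₀ * α) + ((α - ρ) / (1 - p₀)) * T)) < 1
      ↔ (α - ρ) * T < (1 - p₀ * α) * (1 - ρ) := by
  have h₁ : 0 < 1 - p₀ := by linarith
  have h₂ : 0 < 1 - p₀ * ρ := by nlinarith
  have : 1 - (p₀ * α + (1 - p₀) * ((1 / (1 - p₀ * ρ)) *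
      (ρ * (1 - p₀ * α) + ((α - ρ) / (1 - p₀)) * T))) =
      ((1 - p₀ * α) * (1 - ρ) - (α - ρ) * T) / (1 - p₀ * ρ) := by
    field_simp
    ring
  rw [← sub_pos, ← sub_pos (a := _ * _), this, div_pos_iff_of_pos_right h₂]

lemma exists_subinvariant_weights {ρ α : ℝ} (hρ0 : 0 ≤ ρ) (hρ1 : ρ < 1) (hp₀0 : 0 ≤ p₀)
    (hp₀1 : p₀ ≤ 1) (hp : ∀ l ∈ Icc 1 Λ, 0 ≤ p l) (hpsum : p₀ + ∑ l ∈ Icc 1 Λ, p l = 1)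
    (hstab : (α - ρ) * ∑ l ∈ Icc 1 Λ, p l * (p₀ * ρ) ^ l < (1 - p₀ * α) * (1 - ρ)) :
    ∃ w : ℕ → ℝ, (∀ b, 0 ≤ w b ∧ w b ≤ 1) ∧ α * meanNextWeight Λ p₀ p w 0 < w 0 ∧
      ∀ b, 0 < b → ρ * meanNextWeight Λ p₀ p w b ≤ w b := by
  set r := p₀ * ρ
  set T := ∑ l ∈ Icc 1 Λ, p l * r ^ l
  have hr0 : 0 ≤ r := mul_nonneg hp₀0 hρ0
  have hr1 : r ≤ 1 := by nlinarith
  have hT : 0 ≤ T := sum_nonneg fun l hl => mul_nonneg (hp l hl) (pow_nonneg hr0 l)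
  have hD : 0 < 1 - ρ + ρ * T := by nlinarith
  -- `a` solves `a = ρ (a + (1 - a) T)`, the balance of the closed-loop recursion
  obtain ⟨a, ha⟩ : ∃ a, a * (1 - ρ + ρ * T) = ρ * T := ⟨_, div_mul_cancel₀ _ hD.ne'⟩
  have ha0 : 0 ≤ a := by nlinarith
  have ha1 : a ≤ 1 := by nlinarith
  have hmean : ∀ b, meanNextWeight Λ p₀ p (fun b => a + (1 - a) * r ^ b) b =
      p₀ * (a + (1 - a) * r ^ (b - 1)) + a * (1 - p₀) + (1 - a) * T := fun b => by
    simp only [meanNextWeight, mul_add, sum_add_distrib, ← sum_mul, ← mul_sum,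
      mul_left_comm _ (1 - a)]
    linear_combination a * hpsum
  refine ⟨fun b => a + (1 - a) * r ^ b, fun b => ⟨?_, ?_⟩, ?_, fun b hb => ?_⟩
  · nlinarith [pow_nonneg hr0 b]
  · nlinarith [pow_le_one₀ hr0 hr1 (n := b)]
  · have hopen : α * (p₀ + a * (1 - p₀) + (1 - a) * T) * (1 - ρ + ρ * T) =
        α * (p₀ * (1 - ρ) + T) := by linear_combination α * (1 - p₀ - T) * ha
    rw [hmean]
    simp only [Nat.zero_sub, pow_zero, mul_one, add_sub_cancel]
    refine (mul_lt_mul_iff_of_pos_right hD).1 ?_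
    rw [hopen]
    nlinarith
  · obtain ⟨c, rfl⟩ := Nat.exists_eq_add_of_lt hb
    rw [hmean]
    simp only [zero_add, Nat.add_sub_cancel, pow_succ]
    nlinarith

lemma exists_drift_weights {ρ α : ℝ} (hρ0 : 0 ≤ ρ) (hρ1 : ρ < 1) (hα : 0 < α)
    (hpsum : p₀ + ∑ l ∈ Icc 1 Λ, p l = 1) (w : ℕ → ℝ) (hw : ∀ b, 0 ≤ w b ∧ w b ≤ 1)
    (hopen : α * meanNextWeight Λ p₀ p w 0 < w 0)
    (hclosed : ∀ b, 0 < b → ρ * meanNextWeight Λ p₀ p w b ≤ w b) :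
    ∃ (W : ℕ → ℝ) (β ε : ℝ), 0 < ε ∧ 0 ≤ β ∧ β < 1 ∧ (∀ b, ε ≤ W b ∧ W b ≤ 1 + ε) ∧
      ∀ b, (if 0 < b then ρ else α) * meanNextWeight Λ p₀ p W b ≤ β * W b := by
  set ε := (w 0 - α * meanNextWeight Λ p₀ p w 0) / α
  have hε : 0 < ε := div_pos (by linarith) hα
  have hαε : α * ε = w 0 - α * meanNextWeight Λ p₀ p w 0 := mul_div_cancel₀ _ hα.ne'
  -- lifting `w` by `ε` turns the non-strict balance into a strict contraction by `β`
  have hlift : ∀ b, w b + ρ * ε ≤ (1 + ρ * ε) / (1 + ε) * (w b + ε) := fun b => by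
    rw [div_mul_eq_mul_div, le_div_iff₀ (by positivity)]
    nlinarith [mul_nonneg (mul_nonneg (sub_nonneg.2 (hw b).2) (sub_nonneg.2 hρ1.le)) hε.le]
  refine ⟨fun b => w b + ε, (1 + ρ * ε) / (1 + ε), ε, hε, by positivity,
    (div_lt_one (by positivity)).2 (by nlinarith),
    fun b => ⟨by linarith [hw b], by linarith [hw b]⟩, fun b => ?_⟩
  rw [meanNextWeight_add_const hpsum]
  refine le_trans ?_ (hlift b)
  split_ifs with hb
  · linarith [hclosed b hb]
  · obtain rfl : b = 0 := by omega
    nlinarith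

end Weights

def drivenChain {S : Type*} (T : S → ℕ → S) (y₀ : S) (u : ℕ → ℕ) : ℕ → S
  | 0 => y₀
  | k + 1 => T (drivenChain T y₀ u k) (u (k + 1))

section DrivenChain

variable {Ω S : Type*} [MeasurableSpace S] {T : S → ℕ → S} {Y₀ : Ω → S} {N : ℕ → Ω → ℕ}

lemma measurable_drivenChain {mΩ : MeasurableSpace Ω} (ℱ : Filtration ℕ mΩ)
    (hT : ∀ j, Measurable (T · j)) (hY₀ : Measurable[ℱ 0] Y₀)
    (hN : ∀ k, Measurable[ℱ k] (N k)) (k : ℕ) :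
    Measurable[ℱ k] fun ω => drivenChain T (Y₀ ω) (N · ω) k := by
  induction k with
  | zero => exact hY₀
  | succ k ih =>
    have hT' : Measurable fun s : S × ℕ => T s.1 s.2 := measurable_from_prod_countable_left hT
    exact hT'.comp ((ih.mono (ℱ.mono k.le_succ) le_rfl).prodMk (hN (k + 1)))

lemma lintegral_comp_eq_sum_of_indep {m mΩ : MeasurableSpace Ω} {μ : Measure Ω} (hm : m ≤ mΩ)
    {Z : Ω → ℕ} (hZ : Measurable Z) (hind : Indep m (MeasurableSpace.comap Z inferInstance) μ)
    {J : Finset ℕ} (hJ : ∀ ω, Z ω ∈ J) {G : ℕ → Ω → ℝ≥0∞} (hG : ∀ j, Measurable[m] (G j)) :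
    ∫⁻ ω, G (Z ω) ω ∂μ = ∑ j ∈ J, μ {ω | Z ω = j} * ∫⁻ ω, G j ω ∂μ := by
  have hsplit : ∀ ω, G (Z ω) ω = ∑ j ∈ J, G j ω * (Z ⁻¹' {j}).indicator 1 ω := fun ω => by
    rw [sum_eq_single_of_mem _ (hJ ω) fun j _ hj => by simp [Ne.symm hj]]
    simp
  have hI : ∀ j, Measurable[MeasurableSpace.comap Z inferInstance]
      ((Z ⁻¹' {j}).indicator (1 : Ω → ℝ≥0∞)) := fun j =>
    measurable_const.indicator ⟨{j}, measurableSet_singleton j, rfl⟩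
  simp_rw [hsplit]
  rw [lintegral_finsetSum (f := fun j ω => G j ω * (Z ⁻¹' {j}).indicator 1 ω) _
    fun j _ => ((hG j).mono hm le_rfl).mul ((hI j).mono hZ.comap_le le_rfl)]
  refine sum_congr rfl fun j _ => ?_
  rw [lintegral_mul_eq_lintegral_mul_lintegral_of_independent_measurableSpace hm hZ.comap_le hind
    (hG j) (hI j), lintegral_indicator_one (hZ (measurableSet_singleton j)), mul_comm]
  rfl

lemma lintegral_drivenChain_succ_le {mΩ : MeasurableSpace Ω} {μ : Measure Ω}
    (ℱ : Filtration ℕ mΩ) (hT : ∀ j, Measurable (T · j)) (hY₀ : Measurable[ℱ 0] Y₀)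
    (hN : ∀ k, Measurable[ℱ k] (N k))
    (hind : ∀ k, Indep (ℱ k) (MeasurableSpace.comap (N (k + 1)) inferInstance) μ)
    {J : Finset ℕ} (hJ : ∀ k ω, N (k + 1) ω ∈ J) {L : S → ℝ≥0∞} (hL : Measurable L) {β : ℝ≥0∞}
    (hdrift : ∀ k s, ∑ j ∈ J, μ {ω | N (k + 1) ω = j} * L (T s j) ≤ β * L s) (k : ℕ) :
    ∫⁻ ω, L (drivenChain T (Y₀ ω) (N · ω) (k + 1)) ∂μ ≤
      β * ∫⁻ ω, L (drivenChain T (Y₀ ω) (N · ω) k) ∂μ := by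
  set Y := fun ω => drivenChain T (Y₀ ω) (N · ω) k
  have hY : Measurable[ℱ k] Y := measurable_drivenChain ℱ hT hY₀ hN k
  have hG : ∀ j, Measurable[ℱ k] fun ω => L (T (Y ω) j) := fun j => hL.comp ((hT j).comp hY)
  calc ∫⁻ ω, L (T (Y ω) (N (k + 1) ω)) ∂μ
      = ∑ j ∈ J, μ {ω | N (k + 1) ω = j} * ∫⁻ ω, L (T (Y ω) j) ∂μ :=
        lintegral_comp_eq_sum_of_indep (ℱ.le k) ((hN (k + 1)).mono (ℱ.le _) le_rfl) (hind k)
          (hJ k) hG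
    _ = ∫⁻ ω, ∑ j ∈ J, μ {ω | N (k + 1) ω = j} * L (T (Y ω) j) ∂μ := by
        rw [lintegral_finsetSum _ fun j _ => ((hG j).mono (ℱ.le k) le_rfl).const_mul _]
        simp_rw [lintegral_const_mul _ ((hG _).mono (ℱ.le k) le_rfl)]
    _ ≤ ∫⁻ ω, β * L (Y ω) ∂μ := lintegral_mono fun ω => hdrift k (Y ω)
    _ = β * ∫⁻ ω, L (Y ω) ∂μ := lintegral_const_mul _ ((hL.comp hY).mono (ℱ.le k) le_rfl)

theorem lintegral_drivenChain_le {mΩ : MeasurableSpace Ω} {μ : Measure Ω}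
    (ℱ : Filtration ℕ mΩ) (hT : ∀ j, Measurable (T · j)) (hY₀ : Measurable[ℱ 0] Y₀)
    (hN : ∀ k, Measurable[ℱ k] (N k))
    (hind : ∀ k, Indep (ℱ k) (MeasurableSpace.comap (N (k + 1)) inferInstance) μ)
    {J : Finset ℕ} (hJ : ∀ k ω, N (k + 1) ω ∈ J) {L : S → ℝ≥0∞} (hL : Measurable L) {β : ℝ≥0∞}
    (hdrift : ∀ k s, ∑ j ∈ J, μ {ω | N (k + 1) ω = j} * L (T s j) ≤ β * L s) (k : ℕ) :
    ∫⁻ ω, L (drivenChain T (Y₀ ω) (N · ω) k) ∂μ ≤ β ^ k * ∫⁻ ω, L (Y₀ ω) ∂μ := by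
  induction k with
  | zero => simp [drivenChain]
  | succ k ih =>
    calc _ ≤ β * ∫⁻ ω, L (drivenChain T (Y₀ ω) (N · ω) k) ∂μ :=
          lintegral_drivenChain_succ_le ℱ hT hY₀ hN hind hJ hL hdrift k
      _ ≤ β * (β ^ k * ∫⁻ ω, L (Y₀ ω) ∂μ) := by gcongr
      _ = β ^ (k + 1) * ∫⁻ ω, L (Y₀ ω) ∂μ := by ring

end DrivenChain

namespace ProbabilityTheory

variable {Ω : Type*} {mΩ : MeasurableSpace Ω} {μ : Measure Ω}

lemma IndepFun.lintegral_comp_eq_lintegral_lintegral [IsFiniteMeasure μ] {α β : Type*}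
    [MeasurableSpace α] [MeasurableSpace β] {X : Ω → α} {Y : Ω → β} (h : IndepFun X Y μ)
    (hX : Measurable X) (hY : Measurable Y) {g : α × β → ℝ≥0∞} (hg : Measurable g) :
    ∫⁻ ω, g (X ω, Y ω) ∂μ = ∫⁻ a, ∫⁻ ω, g (a, Y ω) ∂μ ∂(μ.map X) := by
  rw [← lintegral_map hg (hX.prodMk hY),
    h.map_prod_eq_prod_map_map hX.aemeasurable hY.aemeasurable, lintegral_prod _ hg.aemeasurable]
  exact lintegral_congr fun a => lintegral_map (hg.comp measurable_prodMk_left) hY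

lemma iIndepFun.indep_natural_succ {N : ℕ → Ω → ℕ} (hN : ∀ k, Measurable (N k))
    (hind : iIndepFun N μ) (k : ℕ) :
    Indep (Filtration.natural N (fun k => (hN k).stronglyMeasurable) k)
      (MeasurableSpace.comap (N (k + 1)) inferInstance) μ := by
  have := indep_iSup_of_disjoint (fun k => (hN k).comap_le) hind
    (S := {i | i ≤ k}) (T := {k + 1}) (by simp)
  rwa [_root_.iSup_singleton] at this

lemma ae_frequently_pos_of_iIndepFun [IsProbabilityMeasure μ] {N : ℕ → Ω → ℕ}
    (hN : ∀ k, Measurable (N k)) (hind : iIndepFun N μ) {c : ℝ≥0∞} (hc : c < 1)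
    (hzero : ∀ k, μ {ω | N (k + 1) ω = 0} ≤ c) :
    ∀ᵐ ω ∂μ, ∃ᶠ j in atTop, 0 < N j ω := by
  set s : ℕ → Set Ω := fun k => {ω | 0 < N (k + 1) ω}
  have hsm : ∀ k, MeasurableSet (s k) := fun k => hN (k + 1) (Set.to_countable _).measurableSet
  have hs : iIndepSet s μ := iIndep_of_iIndep_of_le (hind.precomp Nat.succ_injective) fun k =>
    MeasurableSpace.generateFrom_le fun t ht =>
      ht ▸ ⟨_, (Set.to_countable _).measurableSet, rfl⟩
  have hμs : ∀ k, 1 - c ≤ μ (s k) := fun k => by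
    have : s k = {ω | N (k + 1) ω = 0}ᶜ := by ext; simp [s, Nat.pos_iff_ne_zero]
    rw [this, prob_compl_eq_one_sub]
    exacts [tsub_le_tsub_left (hzero k) 1, hN (k + 1) (measurableSet_singleton 0)]
  have hsum : ∑' k, μ (s k) = ∞ := top_unique <|
    (ENNReal.tsum_const_eq_top_of_ne_zero (tsub_pos_of_lt hc).ne').symm.le.trans
      (ENNReal.tsum_le_tsum hμs)
  have hlimsup : ∀ᵐ ω ∂μ, ω ∈ limsup s atTop :=
    (ae_mem_iff_measure_eq (MeasurableSet.measurableSet_limsup hsm).nullMeasurableSet).2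
      ((measure_limsup_eq_one hsm hs hsum).trans measure_univ.symm)
  filter_upwards [hlimsup] with ω hω
  exact (tendsto_add_atTop_nat 1).frequently (mem_limsup_iff_frequently_mem.1 hω)

end ProbabilityTheory

section AlgorithmA1

variable {E : Type*}

/-- One step of Algorithm A₁ on the state `(b, x)`, where `b` counts the precomputed controls
still to be applied and `j` is the number of controls computed at the next time (`0`: none).
At `b = 0` the truncated `b - 1` keeps the empty buffer empty. -/
def bufferedStep (g₁ g₀ : E → E) (s : ℕ × E) (j : ℕ) : ℕ × E :=
  (if 0 < j then j else s.1 - 1, if 0 < s.1 then g₁ s.2 else g₀ s.2)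

variable {u : ℕ → ℕ} {karr : ℕ → ℕ}

lemma arrival_lt_succ_and_pos (hu : ∃ᶠ j in atTop, 0 < u j)
    (hsucc : ∀ i, karr (i + 1) = sInf {k | karr i < k ∧ 0 < u k}) (i : ℕ) :
    karr i < karr (i + 1) ∧ 0 < u (karr (i + 1)) :=
  hsucc i ▸ Nat.sInf_mem (frequently_atTop'.1 hu (karr i))

lemma arrival_succ_le (hsucc : ∀ i, karr (i + 1) = sInf {k | karr i < k ∧ 0 < u k}) {i k : ℕ}
    (hik : karr i < k) (hk : 0 < u k) : karr (i + 1) ≤ k :=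
  hsucc i ▸ Nat.sInf_le ⟨hik, hk⟩

lemma exists_drivenChain_bufferedStep_eq {g₁ g₀ : E → E} (hu : ∃ᶠ j in atTop, 0 < u j)
    (h0 : karr 0 = 0) (hsucc : ∀ i, karr (i + 1) = sInf {k | karr i < k ∧ 0 < u k})
    {x : ℕ → E} (harr : ∀ i, ∀ ℓ ≤ min (u (karr i)) (karr (i + 1) - karr i),
      x (karr i + ℓ) = g₁^[ℓ] (x (karr i)))
    (hol : ∀ i k, karr i + u (karr i) ≤ k → k < karr (i + 1) → x (k + 1) = g₀ (x k)) (k : ℕ) :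
    ∃ i, karr i ≤ k ∧ k < karr (i + 1) ∧
      drivenChain (bufferedStep g₁ g₀) (u 0, x 0) u k = (u (karr i) - (k - karr i), x k) := by
  induction k with
  | zero =>
    refine ⟨0, h0.le, ?_, by simp [drivenChain, h0]⟩
    have := (arrival_lt_succ_and_pos hu hsucc 0).1
    omega
  | succ k ih =>
    obtain ⟨i, hik, hki, hchain⟩ := ih
    have hx : x (k + 1) = if 0 < u (karr i) - (k - karr i) then g₁ (x k) else g₀ (x k) := by
      split_ifs with hb
      · have hxk := harr i (k - karr i) (by omega)
        have hxk' := harr i (k - karr i + 1) (by omega)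
        rw [Nat.add_sub_cancel' hik] at hxk
        rwa [← add_assoc, Nat.add_sub_cancel' hik, Function.iterate_succ_apply', ← hxk] at hxk'
      · exact hol i k (by omega) hki
    simp only [drivenChain, hchain, bufferedStep, ← hx]
    by_cases hnew : 0 < u (k + 1)
    · have harrival : karr (i + 1) = k + 1 :=
        le_antisymm (arrival_succ_le hsucc (by omega) hnew) hki
      refine ⟨i + 1, by omega, ?_, by simp [hnew, harrival]⟩
      exact harrival ▸ (arrival_lt_succ_and_pos hu hsucc (i + 1)).1
    · have : karr (i + 1) ≠ k + 1 := fun h => hnew (h ▸ (arrival_lt_succ_and_pos hu hsucc i).2)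
      exact ⟨i, by omega, by omega, by simp [hnew]; omega⟩

lemma bufferedStep_drift {g₁ g₀ : E → E} {V : E → ℝ} (hV : ∀ x, 0 ≤ V x) {ρ α : ℝ}
    (hg₁ : ∀ x, V (g₁ x) ≤ ρ * V x) (hg₀ : ∀ x, V (g₀ x) ≤ α * V x) {Λ : ℕ} {p₀ : ℝ}
    {p : ℕ → ℝ} (hp₀ : 0 ≤ p₀) (hp : ∀ l ∈ Icc 1 Λ, 0 ≤ p l) {W : ℕ → ℝ} (hW : ∀ b, 0 ≤ W b)
    {β : ℝ} (hβ : 0 ≤ β)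
    (hdrift : ∀ b, (if 0 < b then ρ else α) * meanNextWeight Λ p₀ p W b ≤ β * W b)
    {q : ℕ → ℝ≥0∞} (hq₀ : q 0 = ENNReal.ofReal p₀)
    (hq : ∀ l ∈ Icc 1 Λ, q l = ENNReal.ofReal (p l)) (s : ℕ × E) :
    ∑ j ∈ insert 0 (Icc 1 Λ), q j *
        ENNReal.ofReal (W (bufferedStep g₁ g₀ s j).1 * V (bufferedStep g₁ g₀ s j).2) ≤
      ENNReal.ofReal β * ENNReal.ofReal (W s.1 * V s.2) := by
  obtain ⟨b, x⟩ := s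
  set x' := if 0 < b then g₁ x else g₀ x
  have hx' : V x' ≤ (if 0 < b then ρ else α) * V x := by
    simp only [x']
    split_ifs
    exacts [hg₁ x, hg₀ x]
  have hsum : ∑ j ∈ insert 0 (Icc 1 Λ), q j *
      ENNReal.ofReal (W (bufferedStep g₁ g₀ (b, x) j).1 * V (bufferedStep g₁ g₀ (b, x) j).2) =
      ENNReal.ofReal (meanNextWeight Λ p₀ p W b * V x') := by
    rw [meanNextWeight, add_mul, sum_mul, sum_insert (by simp),
      ENNReal.ofReal_add (mul_nonneg (mul_nonneg hp₀ (hW _)) (hV _))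
        (sum_nonneg fun l hl => mul_nonneg (mul_nonneg (hp l hl) (hW l)) (hV _)),
      ENNReal.ofReal_sum_of_nonneg fun l hl => mul_nonneg (mul_nonneg (hp l hl) (hW l)) (hV _),
      hq₀, mul_assoc, ENNReal.ofReal_mul hp₀]
    congr 1
    refine sum_congr rfl fun l hl => ?_
    have hl₀ : 0 < l := (mem_Icc.1 hl).1
    rw [hq l hl, mul_assoc, ENNReal.ofReal_mul (hp l hl)]
    simp [bufferedStep, hl₀, x']
  rw [hsum, ← ENNReal.ofReal_mul hβ]
  refine ENNReal.ofReal_le_ofReal ?_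
  have hmean : 0 ≤ meanNextWeight Λ p₀ p W b :=
    add_nonneg (mul_nonneg hp₀ (hW _)) (sum_nonneg fun l hl => mul_nonneg (hp l hl) (hW l))
  calc meanNextWeight Λ p₀ p W b * V x'
      ≤ meanNextWeight Λ p₀ p W b * ((if 0 < b then ρ else α) * V x) := by gcongr
    _ ≤ β * (W b * V x) := by nlinarith [hdrift b, hV x]

end AlgorithmA1

lemma ENNReal.tsum_lt_top_of_le_geometric {a : ℕ → ℝ≥0∞} {C r : ℝ≥0∞} (hC : C ≠ ∞)
    (hr : r < 1) (h : ∀ k, a k ≤ C * r ^ k) : ∑' k, a k < ∞ :=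
  calc ∑' k, a k ≤ ∑' k, C * r ^ k := ENNReal.tsum_le_tsum h
    _ = C * (1 - r)⁻¹ := by rw [ENNReal.tsum_mul_left, ENNReal.tsum_geometric]
    _ < ∞ := ENNReal.mul_lt_top hC.lt_top (ENNReal.inv_lt_top.2 (tsub_pos_of_lt hr))

section AlgorithmA1Lyapunov

variable {Ω E : Type*} {mΩ : MeasurableSpace Ω} [MeasurableSpace E] {μ : Measure Ω}

lemma measurable_bufferedStep {g₁ g₀ : E → E} (hg₁ : Measurable g₁) (hg₀ : Measurable g₀)
    (j : ℕ) : Measurable (bufferedStep g₁ g₀ · j) :=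
  ((measurable_from_nat (f := fun b => if 0 < j then j else b - 1)).comp measurable_fst).prodMk <|
    Measurable.ite (measurable_fst (Set.to_countable {b : ℕ | 0 < b}).measurableSet)
      (hg₁.comp measurable_snd) (hg₀.comp measurable_snd)

theorem lintegral_drivenChain_le_of_indepFun [IsProbabilityMeasure μ] {T : ℕ × E → ℕ → ℕ × E}
    (hT : ∀ j, Measurable (T · j)) {N : ℕ → Ω → ℕ} (hN : ∀ k, Measurable (N k))
    (hNind : iIndepFun N μ) {x₀ : Ω → E} (hx₀ : Measurable x₀)
    (hx₀N : IndepFun x₀ (fun ω k => N k ω) μ) {J : Finset ℕ} (hJ : ∀ k ω, N (k + 1) ω ∈ J)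
    {L : ℕ × E → ℝ≥0∞} (hL : Measurable L) {β : ℝ≥0∞}
    (hdrift : ∀ k s, ∑ j ∈ J, μ {ω | N (k + 1) ω = j} * L (T s j) ≤ β * L s) (k : ℕ) :
    ∫⁻ ω, L (drivenChain T (N 0 ω, x₀ ω) (N · ω) k) ∂μ ≤ β ^ k * ∫⁻ ω, L (N 0 ω, x₀ ω) ∂μ := by
  have hNseq : Measurable fun ω k => N k ω := measurable_pi_lambda _ hN
  have hg : ∀ k, Measurable fun y : E × (ℕ → ℕ) => L (drivenChain T (y.2 0, y.1) y.2 k) :=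
    fun k => hL.comp (measurable_drivenChain ⊤ hT
      ((measurable_pi_apply 0).comp measurable_snd |>.prodMk measurable_fst)
      (fun k => (measurable_pi_apply k).comp measurable_snd) k)
  let ℱ := Filtration.natural N fun k => (hN k).stronglyMeasurable
  have hℱ : ∀ k, Measurable[ℱ k] (N k) := fun k =>
    (Filtration.stronglyAdapted_natural (u := N) (fun k => (hN k).stronglyMeasurable) k).measurable
  -- condition on `x₀`, which is independent of the driving sequence
  calc ∫⁻ ω, L (drivenChain T (N 0 ω, x₀ ω) (N · ω) k) ∂μ
      = ∫⁻ a, ∫⁻ ω, L (drivenChain T (N 0 ω, a) (N · ω) k) ∂μ ∂(μ.map x₀) :=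
        hx₀N.lintegral_comp_eq_lintegral_lintegral hx₀ hNseq (hg k)
    _ ≤ ∫⁻ a, β ^ k * ∫⁻ ω, L (N 0 ω, a) ∂μ ∂(μ.map x₀) := lintegral_mono fun a =>
        lintegral_drivenChain_le ℱ hT ((hℱ 0).prodMk measurable_const) hℱ
          (hNind.indep_natural_succ hN) hJ hL hdrift k
    _ = β ^ k * ∫⁻ a, ∫⁻ ω, L (N 0 ω, a) ∂μ ∂(μ.map x₀) := lintegral_const_mul _
        (hL.comp (((hN 0).comp measurable_snd).prodMk measurable_fst)).lintegral_prod_right'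
    _ = β ^ k * ∫⁻ ω, L (N 0 ω, x₀ ω) ∂μ := by
        congr 1
        exact (hx₀N.lintegral_comp_eq_lintegral_lintegral hx₀ hNseq (hg 0)).symm

theorem tsum_lintegral_bufferedChain_lt_top [IsProbabilityMeasure μ] {g₁ g₀ : E → E}
    (hg₁ : Measurable g₁) (hg₀ : Measurable g₀) {V : E → ℝ} (hVm : Measurable V)
    (hV : ∀ x, 0 ≤ V x) {ρ α : ℝ} (hg₁V : ∀ x, V (g₁ x) ≤ ρ * V x)
    (hg₀V : ∀ x, V (g₀ x) ≤ α * V x) {Λ : ℕ} {p₀ : ℝ} {p : ℕ → ℝ} (hp₀ : 0 ≤ p₀)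
    (hp : ∀ l ∈ Icc 1 Λ, 0 ≤ p l) {W : ℕ → ℝ} {β ε : ℝ} (hε : 0 < ε) (hβ0 : 0 ≤ β)
    (hβ1 : β < 1) (hW : ∀ b, ε ≤ W b ∧ W b ≤ 1 + ε)
    (hdrift : ∀ b, (if 0 < b then ρ else α) * meanNextWeight Λ p₀ p W b ≤ β * W b)
    {N : ℕ → Ω → ℕ} (hN : ∀ k, Measurable (N k)) (hNind : iIndepFun N μ)
    (hNval : ∀ k ω, N (k + 1) ω ≤ Λ) (hN0 : ∀ k, μ {ω | N (k + 1) ω = 0} = ENNReal.ofReal p₀)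
    (hNl : ∀ k, ∀ l ∈ Icc 1 Λ, μ {ω | N (k + 1) ω = l} = ENNReal.ofReal (p l))
    {x₀ : Ω → E} (hx₀ : Measurable x₀) (hx₀N : IndepFun x₀ (fun ω k => N k ω) μ)
    (hVx₀ : ∫⁻ ω, ENNReal.ofReal (V (x₀ ω)) ∂μ ≠ ∞) :
    ∑' k, ∫⁻ ω, ENNReal.ofReal
      (V (drivenChain (bufferedStep g₁ g₀) (N 0 ω, x₀ ω) (N · ω) k).2) ∂μ < ∞ := by
  set L : ℕ × E → ℝ≥0∞ := fun s => ENNReal.ofReal (W s.1 * V s.2)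
  set Y := fun k ω => drivenChain (bufferedStep g₁ g₀) (N 0 ω, x₀ ω) (N · ω) k
  have hY : ∀ k, ∫⁻ ω, L (Y k ω) ∂μ ≤ ENNReal.ofReal β ^ k * ∫⁻ ω, L (N 0 ω, x₀ ω) ∂μ :=
    lintegral_drivenChain_le_of_indepFun (measurable_bufferedStep hg₁ hg₀) hN hNind hx₀ hx₀N
      (fun k ω => by have := hNval k ω; simp only [mem_insert, mem_Icc]; omega)
      (ENNReal.measurable_ofReal.comp
        ((measurable_from_nat.comp measurable_fst).mul (hVm.comp measurable_snd)))
      fun k => bufferedStep_drift hV hg₁V hg₀V hp₀ hp (fun b => hε.le.trans (hW b).1) hβ0 hdrift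
        (hN0 k) (hNl k)
  have hVL : ∀ s, ENNReal.ofReal (V s.2) ≤ ENNReal.ofReal ε⁻¹ * L s := fun s => by
    rw [← ENNReal.ofReal_mul (inv_nonneg.2 hε.le)]
    refine ENNReal.ofReal_le_ofReal ((le_inv_mul_iff₀ hε).2 ?_)
    exact mul_le_mul_of_nonneg_right (hW _).1 (hV _)
  have hLV : ∀ s, L s ≤ ENNReal.ofReal (1 + ε) * ENNReal.ofReal (V s.2) := fun s => by
    rw [← ENNReal.ofReal_mul (by linarith)]
    exact ENNReal.ofReal_le_ofReal (mul_le_mul_of_nonneg_right (hW _).2 (hV _))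
  have hY₀ : ∫⁻ ω, L (N 0 ω, x₀ ω) ∂μ ≠ ∞ := by
    refine ne_top_of_le_ne_top (ENNReal.mul_ne_top (ENNReal.ofReal_ne_top (r := 1 + ε)) hVx₀) ?_
    rw [← lintegral_const_mul' _ _ ENNReal.ofReal_ne_top]
    exact lintegral_mono fun ω => hLV _
  refine ENNReal.tsum_lt_top_of_le_geometric
    (ENNReal.mul_ne_top (ENNReal.ofReal_ne_top (r := ε⁻¹)) hY₀) (ENNReal.ofReal_lt_one.2 hβ1)
    fun k => ?_
  calc ∫⁻ ω, ENNReal.ofReal (V (Y k ω).2) ∂μ ≤ ∫⁻ ω, ENNReal.ofReal ε⁻¹ * L (Y k ω) ∂μ :=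
        lintegral_mono fun ω => hVL _
    _ = ENNReal.ofReal ε⁻¹ * ∫⁻ ω, L (Y k ω) ∂μ := lintegral_const_mul' _ _ ENNReal.ofReal_ne_top
    _ ≤ ENNReal.ofReal ε⁻¹ * (ENNReal.ofReal β ^ k * ∫⁻ ω, L (N 0 ω, x₀ ω) ∂μ) := by
        gcongr
        exact hY k
    _ = _ := by ring

end AlgorithmA1Lyapunov

theorem stmt_7_general
    {n p' m : ℕ}
    (f : EuclideanSpace ℝ (Fin n) → EuclideanSpace ℝ (Fin p') → EuclideanSpace ℝ (Fin m) →
      EuclideanSpace ℝ (Fin n))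
    (hfmeas : Measurable fun q : EuclideanSpace ℝ (Fin n) × EuclideanSpace ℝ (Fin p') ×
      EuclideanSpace ℝ (Fin m) => f q.1 q.2.1 q.2.2)
    (V : EuclideanSpace ℝ (Fin n) → ℝ) (hVmeas : Measurable V) (hVnonneg : ∀ x, 0 ≤ V x)
    (κ : EuclideanSpace ℝ (Fin n) → EuclideanSpace ℝ (Fin p')) (hκmeas : Measurable κ)
    -- Assumption 1: class-K∞ bounds and closed-loop contraction
    (φ₁ φ₂ : ℝ → ℝ)
    (ρ : ℝ) (hρ0 : 0 ≤ ρ) (hρ1 : ρ < 1)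
    (hsandwich : ∀ x, φ₁ ‖x‖ ≤ V x ∧ V x ≤ φ₂ ‖x‖)
    (hcontract : ∀ x, V (f x (κ x) 0) ≤ ρ * V x)
    -- Assumption 2: distribution of the number of computed controls
    (Λ : ℕ) (p₀ : ℝ) (p : ℕ → ℝ)
    (hp₀0 : 0 ≤ p₀) (hp₀1 : p₀ < 1)
    (hpnonneg : ∀ l ∈ Finset.Icc 1 Λ, 0 ≤ p l)
    (hpsum : p₀ + ∑ l ∈ Finset.Icc 1 Λ, p l = 1)
    -- Assumption 3: open-loop growth bound with α ∈ [1, 1/p₀)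
    (α : ℝ) (hα1 : 1 ≤ α)
    (hgrow : ∀ x, V (f x 0 0) ≤ α * V x)
    -- probability space and the sequence-length process N
    {Ω : Type*} [MeasurableSpace Ω] (μ : Measure Ω) [IsProbabilityMeasure μ]
    (N : ℕ → Ω → ℕ) (hNmeas : ∀ k, Measurable (N k))
    (hNval : ∀ k ω, 1 ≤ k → N k ω ≤ Λ)
    (hNdist0 : ∀ k, 1 ≤ k → μ {ω | N k ω = 0} = ENNReal.ofReal p₀)
    (hNdist : ∀ k, 1 ≤ k → ∀ l ∈ Finset.Icc 1 Λ, μ {ω | N k ω = l} = ENNReal.ofReal (p l))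
    (hNiid : iIndepFun N μ)
    -- initial state, independent of the N process
    (x0 : Ω → EuclideanSpace ℝ (Fin n)) (hx0meas : Measurable x0)
    (hx0indep : IndepFun x0 (fun ω k => N k ω) μ)
    (hx0int : ∫⁻ ω, ENNReal.ofReal (φ₂ ‖x0 ω‖) ∂μ < ⊤)
    -- arrival times k_i and the closed-loop trajectory of Algorithm A₁
    (karr : ℕ → Ω → ℕ)
    (hkarr0 : ∀ ω, karr 0 ω = 0)
    (hkarrsucc : ∀ i ω, karr (i + 1) ω = sInf {k : ℕ | karr i ω < k ∧ 0 < N k ω})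
    (x : ℕ → Ω → EuclideanSpace ℝ (Fin n))
    (hxinit : ∀ ω, x 0 ω = x0 ω)
    (hxarr : ∀ i ω, ∀ ℓ ≤ min (N (karr i ω) ω) (karr (i + 1) ω - karr i ω),
      x (karr i ω + ℓ) ω = (fun χ => f χ (κ χ) 0)^[ℓ] (x (karr i ω) ω))
    (hxol : ∀ i ω, ∀ k, karr i ω + N (karr i ω) ω ≤ k → k < karr (i + 1) ω →
      x (k + 1) ω = f (x k ω) 0 0)
    -- stability condition of Theorem 2
    (hstab : p₀ * α + (1 - p₀) * ((1 / (1 - p₀ * ρ)) *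
        (ρ * (1 - p₀ * α) + ((α - ρ) / (1 - p₀)) * ∑ l ∈ Finset.Icc 1 Λ, p l * (p₀ * ρ) ^ l))
      < 1) :
    ∑' k : ℕ, ∫⁻ ω, ENNReal.ofReal (φ₁ ‖x k ω‖) ∂μ < ⊤ := by
  obtain ⟨w, hw, hopen, hclosed⟩ := exists_subinvariant_weights hρ0 hρ1 hp₀0 hp₀1.le hpnonneg
    hpsum ((stability_condition_iff hρ0 hρ1 hp₀1).1 hstab)
  obtain ⟨W, β, ε, hε, hβ0, hβ1, hW, hWdrift⟩ :=
    exists_drift_weights hρ0 hρ1 (zero_lt_one.trans_le hα1) hpsum w hw hopen hclosed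
  have hx : ∀ k, ∀ᵐ ω ∂μ, x k ω = (drivenChain (bufferedStep (fun χ => f χ (κ χ) 0)
      (fun χ => f χ 0 0)) (N 0 ω, x0 ω) (N · ω) k).2 := fun k => by
    filter_upwards [ae_frequently_pos_of_iIndepFun hNmeas hNiid (ENNReal.ofReal_lt_one.2 hp₀1)
      fun k => (hNdist0 (k + 1) k.succ_pos).le] with ω hω
    obtain ⟨i, -, -, h⟩ := exists_drivenChain_bufferedStep_eq (g₀ := fun χ => f χ 0 0)
      (karr := (karr · ω)) (x := (x · ω)) hω (hkarr0 ω) (hkarrsucc · ω) (hxarr · ω) (hxol · ω) k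
    rw [hxinit ω] at h
    exact (congrArg Prod.snd h).symm
  refine lt_of_le_of_lt (ENNReal.tsum_le_tsum fun k => lintegral_mono_ae ?_)
    (tsum_lintegral_bufferedChain_lt_top
      (hfmeas.comp (measurable_id.prodMk (hκmeas.prodMk measurable_const)))
      (hfmeas.comp (measurable_id.prodMk (measurable_const.prodMk measurable_const)))
      hVmeas hVnonneg hcontract hgrow hp₀0 hpnonneg hε hβ0 hβ1 hW hWdrift hNmeas hNiid
      (fun k ω => hNval (k + 1) ω k.succ_pos) (fun k => hNdist0 (k + 1) k.succ_pos)
      (fun k => hNdist (k + 1) k.succ_pos) hx0meas hx0indep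
      ((lintegral_mono fun ω => ENNReal.ofReal_le_ofReal (hsandwich _).2).trans_lt hx0int).ne)
  filter_upwards [hx k] with ω hω
  rw [hω]
  exact ENNReal.ofReal_le_ofReal (hsandwich _).1

/-- Stochastic stability of Algorithm A₁ with i.i.d. availability (Theorem 2).
Tentative controls are generated by the feedback `κ` along the nominal model at each arrival
time `k_i` (times with `N(k_i) ≥ 1`), are applied for `min(N(k_i), Δ_i)` steps, and the plant
runs open loop on the remaining steps of each inter-arrival interval. If
`p₀α + (1−p₀)σ < 1`, where
`σ = (1/(1−p₀ρ))(ρ(1−p₀α) + ((α−ρ)/(1−p₀)) ∑_{l=1}^{Λ} p_l (p₀ρ)^l)`,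
then `∑_{k=0}^∞ E[φ₁(|x(k)|)] < ∞`. -/
theorem stmt_7
    {n p' m : ℕ}
    (f : EuclideanSpace ℝ (Fin n) → EuclideanSpace ℝ (Fin p') → EuclideanSpace ℝ (Fin m) →
      EuclideanSpace ℝ (Fin n))
    (hfmeas : Measurable fun q : EuclideanSpace ℝ (Fin n) × EuclideanSpace ℝ (Fin p') ×
      EuclideanSpace ℝ (Fin m) => f q.1 q.2.1 q.2.2)
    (hf0 : f 0 0 0 = 0)
    (V : EuclideanSpace ℝ (Fin n) → ℝ) (hVmeas : Measurable V) (hVnonneg : ∀ x, 0 ≤ V x)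
    (κ : EuclideanSpace ℝ (Fin n) → EuclideanSpace ℝ (Fin p')) (hκmeas : Measurable κ)
    -- Assumption 1: class-K∞ bounds and closed-loop contraction
    (φ₁ φ₂ : ℝ → ℝ)
    (hφ₁K : Continuous φ₁ ∧ φ₁ 0 = 0 ∧ StrictMonoOn φ₁ (Set.Ici 0) ∧ Tendsto φ₁ atTop atTop)
    (hφ₂K : Continuous φ₂ ∧ φ₂ 0 = 0 ∧ StrictMonoOn φ₂ (Set.Ici 0) ∧ Tendsto φ₂ atTop atTop)
    (ρ : ℝ) (hρ0 : 0 ≤ ρ) (hρ1 : ρ < 1)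
    (hsandwich : ∀ x, φ₁ ‖x‖ ≤ V x ∧ V x ≤ φ₂ ‖x‖)
    (hcontract : ∀ x, V (f x (κ x) 0) ≤ ρ * V x)
    -- Assumption 2: distribution of the number of computed controls
    (Λ : ℕ) (p₀ : ℝ) (p : ℕ → ℝ)
    (hp₀0 : 0 ≤ p₀) (hp₀1 : p₀ < 1)
    (hpnonneg : ∀ l ∈ Finset.Icc 1 Λ, 0 ≤ p l)
    (hpsum : p₀ + ∑ l ∈ Finset.Icc 1 Λ, p l = 1)
    -- Assumption 3: open-loop growth bound with α ∈ [1, 1/p₀)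
    (α : ℝ) (hα1 : 1 ≤ α) (hαp : p₀ * α < 1)
    (hgrow : ∀ x, V (f x 0 0) ≤ α * V x)
    -- probability space and the sequence-length process N
    {Ω : Type*} [MeasurableSpace Ω] (μ : Measure Ω) [IsProbabilityMeasure μ]
    (N : ℕ → Ω → ℕ) (hNmeas : ∀ k, Measurable (N k))
    (hN0val : ∀ ω, 1 ≤ N 0 ω ∧ N 0 ω ≤ Λ)
    (hN0dist : ∀ l ∈ Finset.Icc 1 Λ, μ {ω | N 0 ω = l} = ENNReal.ofReal (p l / (1 - p₀)))
    (hNval : ∀ k ω, 1 ≤ k → N k ω ≤ Λ)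
    (hNdist0 : ∀ k, 1 ≤ k → μ {ω | N k ω = 0} = ENNReal.ofReal p₀)
    (hNdist : ∀ k, 1 ≤ k → ∀ l ∈ Finset.Icc 1 Λ, μ {ω | N k ω = l} = ENNReal.ofReal (p l))
    (hNiid : iIndepFun N μ)
    -- initial state, independent of the N process
    (x0 : Ω → EuclideanSpace ℝ (Fin n)) (hx0meas : Measurable x0)
    (hx0indep : IndepFun x0 (fun ω k => N k ω) μ)
    (hx0int : ∫⁻ ω, ENNReal.ofReal (φ₂ ‖x0 ω‖) ∂μ < ⊤)
    -- arrival times k_i and the closed-loop trajectory of Algorithm A₁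
    (karr : ℕ → Ω → ℕ)
    (hkarr0 : ∀ ω, karr 0 ω = 0)
    (hkarrsucc : ∀ i ω, karr (i + 1) ω = sInf {k : ℕ | karr i ω < k ∧ 0 < N k ω})
    (x : ℕ → Ω → EuclideanSpace ℝ (Fin n))
    (hxinit : ∀ ω, x 0 ω = x0 ω)
    (hxarr : ∀ i ω, ∀ ℓ ≤ min (N (karr i ω) ω) (karr (i + 1) ω - karr i ω),
      x (karr i ω + ℓ) ω = (fun χ => f χ (κ χ) 0)^[ℓ] (x (karr i ω) ω))
    (hxol : ∀ i ω, ∀ k, karr i ω + N (karr i ω) ω ≤ k → k < karr (i + 1) ω →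
      x (k + 1) ω = f (x k ω) 0 0)
    -- stability condition of Theorem 2
    (hstab : p₀ * α + (1 - p₀) * ((1 / (1 - p₀ * ρ)) *
        (ρ * (1 - p₀ * α) + ((α - ρ) / (1 - p₀)) * ∑ l ∈ Finset.Icc 1 Λ, p l * (p₀ * ρ) ^ l))
      < 1) :
    ∑' k : ℕ, ∫⁻ ω, ENNReal.ofReal (φ₁ ‖x k ω‖) ∂μ < ⊤ :=
  stmt_7_general f hfmeas V hVmeas hVnonneg κ hκmeas φ₁ φ₂ ρ hρ0 hρ1 hsandwich hcontract Λ p₀ p hp₀0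
    hp₀1 hpnonneg hpsum α hα1 hgrow μ N hNmeas hNval hNdist0 hNdist hNiid x0 hx0meas hx0indep hx0int
    karr hkarr0 hkarrsucc x hxinit hxarr hxol hstab
end

section
/- Let p₀ ∈ (0,1), ρ ∈ (0,1), α > ρ with α ≥ 1 and p₀·α < 1, and let p₁,…,p_Λ ≥ 0 with p₀ + ∑_{l=1}^{Λ} p_l = 1. Then σ := (1/(1−p₀ρ))·(ρ·(1−p₀α) + ((α−ρ)/(1−p₀))·∑_{l=1}^{Λ} p_l·(p₀ρ)^l) can be rewritten as σ = ρ − ((α−ρ)/((1−p₀)(1−p₀ρ)))·∑_{l=1}^{Λ} p_l·(ρp₀ − (ρp₀)^l), and if p_{l*} > 0 for some l* ∈ {2,…,Λ}, then σ < ρ; hence the stability condition p₀·α + (1−p₀)·σ < 1 for Algorithm A₁ is implied by the baseline condition p₀·α + (1−p₀)·ρ < 1 and is strictly weaker than it. -/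
/-- `σ < ρ` whenever longer sequences occur with positive probability.
`σ` can be rewritten as `σ = ρ − ((α−ρ)/((1−p₀)(1−p₀ρ))) ∑_{l=1}^{Λ} p_l (ρp₀ − (ρp₀)^l)`;
if `p_{l*} > 0` for some `l* ∈ {2,…,Λ}` then `σ < ρ`, hence the Algorithm A₁ condition
`p₀α + (1−p₀)σ < 1` is implied by, and strictly weaker than, the baseline condition
`p₀α + (1−p₀)ρ < 1`. -/
theorem stmt_9
    (p₀ ρ α : ℝ) (Λ : ℕ) (p : ℕ → ℝ)
    (hp₀0 : 0 < p₀) (hp₀1 : p₀ < 1) (hρ0 : 0 < ρ) (hρ1 : ρ < 1)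
    (hα1 : 1 ≤ α) (hαρ : ρ < α) (hpα : p₀ * α < 1)
    (hp : ∀ l ∈ Finset.Icc 1 Λ, 0 ≤ p l)
    (hsum : p₀ + ∑ l ∈ Finset.Icc 1 Λ, p l = 1) :
    ((1 / (1 - p₀ * ρ)) *
        (ρ * (1 - p₀ * α) + ((α - ρ) / (1 - p₀)) * ∑ l ∈ Finset.Icc 1 Λ, p l * (p₀ * ρ) ^ l))
      = ρ - ((α - ρ) / ((1 - p₀) * (1 - p₀ * ρ))) *
          ∑ l ∈ Finset.Icc 1 Λ, p l * (ρ * p₀ - (ρ * p₀) ^ l) ∧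
    ((∃ lstar, 2 ≤ lstar ∧ lstar ≤ Λ ∧ 0 < p lstar) →
      ((1 / (1 - p₀ * ρ)) *
          (ρ * (1 - p₀ * α) + ((α - ρ) / (1 - p₀)) * ∑ l ∈ Finset.Icc 1 Λ, p l * (p₀ * ρ) ^ l))
        < ρ ∧
      (p₀ * α + (1 - p₀) * ((1 / (1 - p₀ * ρ)) *
          (ρ * (1 - p₀ * α) + ((α - ρ) / (1 - p₀)) * ∑ l ∈ Finset.Icc 1 Λ, p l * (p₀ * ρ) ^ l))
        < p₀ * α + (1 - p₀) * ρ) ∧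
      (p₀ * α + (1 - p₀) * ρ < 1 →
        p₀ * α + (1 - p₀) * ((1 / (1 - p₀ * ρ)) *
          (ρ * (1 - p₀ * α) + ((α - ρ) / (1 - p₀)) * ∑ l ∈ Finset.Icc 1 Λ, p l * (p₀ * ρ) ^ l))
        < 1)) := by
  have h1p : (0:ℝ) < 1 - p₀ := by linarith
  have hq0 : (0:ℝ) < p₀ * ρ := mul_pos hp₀0 hρ0
  have hq1 : p₀ * ρ < 1 := by nlinarith
  have h1q : (0:ℝ) < 1 - p₀ * ρ := by linarith
  have hS : ∑ l ∈ Finset.Icc 1 Λ, p l = 1 - p₀ := by linarith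
  have hU : ∑ l ∈ Finset.Icc 1 Λ, p l * (ρ * p₀ - (ρ * p₀) ^ l)
      = ρ * p₀ * (1 - p₀) - ∑ l ∈ Finset.Icc 1 Λ, p l * (p₀ * ρ) ^ l := by
    rw [show ρ * p₀ = p₀ * ρ from mul_comm ρ p₀]
    rw [← hS, Finset.mul_sum, ← Finset.sum_sub_distrib]
    exact Finset.sum_congr rfl fun l _ => by ring
  have hiden : ((1 / (1 - p₀ * ρ)) *
        (ρ * (1 - p₀ * α) + ((α - ρ) / (1 - p₀)) * ∑ l ∈ Finset.Icc 1 Λ, p l * (p₀ * ρ) ^ l))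
      = ρ - ((α - ρ) / ((1 - p₀) * (1 - p₀ * ρ))) *
          ∑ l ∈ Finset.Icc 1 Λ, p l * (ρ * p₀ - (ρ * p₀) ^ l) := by
    rw [hU]
    field_simp
    ring
  refine ⟨hiden, ?_⟩
  rintro ⟨lstar, hl2, hlΛ, hpl⟩
  have hUpos : 0 < ∑ l ∈ Finset.Icc 1 Λ, p l * (ρ * p₀ - (ρ * p₀) ^ l) := by
    have hq0' : (0:ℝ) < ρ * p₀ := mul_pos hρ0 hp₀0
    have hq1' : ρ * p₀ < 1 := by nlinarith
    apply Finset.sum_pos' ?_ ⟨lstar, Finset.mem_Icc.mpr ⟨by omega, hlΛ⟩, ?_⟩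
    · intro l hl
      have hl1 := (Finset.mem_Icc.mp hl).1
      have : (ρ * p₀) ^ l ≤ (ρ * p₀) ^ 1 :=
        pow_le_pow_of_le_one (le_of_lt hq0') (le_of_lt hq1') hl1
      have := hp l hl
      nlinarith [this]
    · have : (ρ * p₀) ^ lstar < (ρ * p₀) ^ 1 :=
        pow_lt_pow_right_of_lt_one₀ hq0' hq1' (by omega)
      have h2 : 0 < ρ * p₀ - (ρ * p₀) ^ lstar := by
        rw [pow_one] at this; linarith
      exact mul_pos hpl h2
  have hcpos : 0 < (α - ρ) / ((1 - p₀) * (1 - p₀ * ρ)) :=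
    div_pos (by linarith) (mul_pos h1p h1q)
  have hσρ : ((1 / (1 - p₀ * ρ)) *
        (ρ * (1 - p₀ * α) + ((α - ρ) / (1 - p₀)) * ∑ l ∈ Finset.Icc 1 Λ, p l * (p₀ * ρ) ^ l)) < ρ := by
    rw [hiden]
    nlinarith [mul_pos hcpos hUpos]
  refine ⟨hσρ, ?_, ?_⟩
  · nlinarith [mul_pos h1p (sub_pos.mpr hσρ)]
  · intro hbase
    nlinarith [mul_pos h1p (sub_pos.mpr hσρ)]
end

section
/- Consider the baseline algorithm with Markovian processor availability: let {g(k)}_{k∈ℕ} be a time-homogeneous Markov chain on the finite state space {1,…,G} with transition matrix Q, and suppose that conditioned on g(k) = ς the processor is unavailable at step k (i.e. no control is computed) with probability p_{0|ς}, independently of the past given g(k). The state evolves as x(k+1) = f(x(k),0,0) when the processor is unavailable and x(k+1) = f(x(k),κ(x(k)),0) otherwise, with x(0) independent of the chain and E[φ₂(|x(0)|)] < ∞. Define p̂₀ := max_{ς∈{1,…,G}} p_{0|ς} and suppose α ∈ [1, 1/p̂₀) satisfies V(f(x,0,0)) ≤ α·V(x) for all x. If p̂₀·α + (1−p̂₀)·ρ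 < 1, then the closed loop is stochastically stable: ∑_{k=0}^∞ E[φ₁(|x(k)|)] < ∞. -/
open MeasureTheory ProbabilityTheory Filter
open scoped ENNReal

/-!
Whatever the processor state, the past up to step `k` (which determines `x k`) leaves the
processor unavailable at step `k` with conditional probability at most `p̂₀`. Splitting
`E[V(x(k+1))]` along availability, the open-loop branch grows `V` by at most `α` and the
closed-loop branch contracts it by `ρ`, so `E[V(x(k+1))] ≤ (p̂₀α + (1 - p̂₀)ρ) E[V(x k)]`
(using `ρ ≤ α`). Hence `E[V(x k)]` decays geometrically, and `φ₁(|x|) ≤ V(x)` gives the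
summability.
-/

section ConditionalBound

variable {Ω : Type*} {m mΩ : MeasurableSpace Ω} {μ : Measure Ω} {s : Set Ω}

lemma measure_inter_le_mul_of_forall_fiber {ι : Type*} [Fintype ι] [MeasurableSpace ι]
    [MeasurableSingletonClass ι] {g : Ω → ι} (hg : Measurable g) {t : Set Ω} {c : ℝ≥0∞}
    (h : ∀ i, μ (s ∩ g ⁻¹' {i} ∩ t) ≤ c * μ (g ⁻¹' {i} ∩ t)) :
    μ (s ∩ t) ≤ c * μ t := by
  have hfiber : ∀ u, ∑ i, μ (g ⁻¹' {i} ∩ u) = μ u := fun u => by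
    simpa [Measure.restrict_apply (hg (measurableSet_singleton _))] using
      sum_measure_preimage_singleton (μ := μ.restrict u) Finset.univ
        fun i _ => hg (measurableSet_singleton i)
  calc μ (s ∩ t) = ∑ i, μ (s ∩ g ⁻¹' {i} ∩ t) := by
        rw [← hfiber]
        simp only [Set.inter_left_comm, Set.inter_assoc]
    _ ≤ ∑ i, c * μ (g ⁻¹' {i} ∩ t) := Finset.sum_le_sum fun i _ => h i
    _ = c * μ t := by rw [← Finset.mul_sum, hfiber]

lemma setLIntegral_le_mul_lintegral_of_forall_measure_inter_le
    (hm : m ≤ mΩ) {c : ℝ≥0∞} (hs : ∀ t, MeasurableSet[m] t → μ (s ∩ t) ≤ c * μ t)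
    {u : Ω → ℝ≥0∞} (hu : Measurable[m] u) :
    ∫⁻ ω in s, u ω ∂μ ≤ c * ∫⁻ ω, u ω ∂μ := by
  have htrim : (μ.restrict s).trim hm ≤ (c • μ).trim hm := by
    refine Measure.le_iff.mpr fun t ht => ?_
    rw [trim_measurableSet_eq hm ht, trim_measurableSet_eq hm ht,
      Measure.restrict_apply (hm t ht), Set.inter_comm, Measure.smul_apply, smul_eq_mul]
    exact hs t ht
  calc ∫⁻ ω in s, u ω ∂μ
        = ∫⁻ ω, u ω ∂(μ.restrict s).trim hm := (lintegral_trim hm hu).symm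
    _ ≤ ∫⁻ ω, u ω ∂(c • μ).trim hm := lintegral_mono' htrim le_rfl
    _ = c * ∫⁻ ω, u ω ∂μ := by
        rw [lintegral_trim hm hu, lintegral_smul_measure, smul_eq_mul]

lemma lintegral_le_of_switching (hm : m ≤ mΩ)
    (hs : MeasurableSet s) {p α ρ : ℝ} (hp : 0 ≤ p) (hρ : 0 ≤ ρ) (hρα : ρ ≤ α)
    (hps : ∀ t, MeasurableSet[m] t → μ (s ∩ t) ≤ ENNReal.ofReal p * μ t)
    {u w : Ω → ℝ≥0∞} (hu : Measurable[m] u)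
    (hw_mem : ∀ ω ∈ s, w ω ≤ ENNReal.ofReal α * u ω)
    (hw_nmem : ∀ ω ∉ s, w ω ≤ ENNReal.ofReal ρ * u ω) :
    ∫⁻ ω, w ω ∂μ ≤ ENNReal.ofReal (p * α + (1 - p) * ρ) * ∫⁻ ω, u ω ∂μ := by
  set J := ∫⁻ ω in s, u ω ∂μ
  set K := ∫⁻ ω in sᶜ, u ω ∂μ
  have hJK : J + K = ∫⁻ ω, u ω ∂μ := lintegral_add_compl u hs
  have hJ : J ≤ ENNReal.ofReal p * ∫⁻ ω, u ω ∂μ :=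
    setLIntegral_le_mul_lintegral_of_forall_measure_inter_le hm hps hu
  have hα : ENNReal.ofReal α = ENNReal.ofReal ρ + ENNReal.ofReal (α - ρ) := by
    rw [← ENNReal.ofReal_add hρ (sub_nonneg.mpr hρα), add_sub_cancel]
  calc ∫⁻ ω, w ω ∂μ
        = ∫⁻ ω in s, w ω ∂μ + ∫⁻ ω in sᶜ, w ω ∂μ :=
          (lintegral_add_compl w hs).symm
    _ ≤ ENNReal.ofReal α * J + ENNReal.ofReal ρ * K := by
        gcongr
        · rw [← lintegral_const_mul' _ _ ENNReal.ofReal_ne_top]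
          exact setLIntegral_mono' hs hw_mem
        · rw [← lintegral_const_mul' _ _ ENNReal.ofReal_ne_top]
          exact setLIntegral_mono' hs.compl hw_nmem
    _ = ENNReal.ofReal ρ * (J + K) + ENNReal.ofReal (α - ρ) * J := by rw [hα]; ring
    _ ≤ ENNReal.ofReal ρ * ∫⁻ ω, u ω ∂μ
          + ENNReal.ofReal (α - ρ) * (ENNReal.ofReal p * ∫⁻ ω, u ω ∂μ) := by
        rw [hJK]; gcongr
    _ = ENNReal.ofReal (p * α + (1 - p) * ρ) * ∫⁻ ω, u ω ∂μ := by
        rw [← mul_assoc, ← ENNReal.ofReal_mul (sub_nonneg.mpr hρα), ← add_mul,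
          ← ENNReal.ofReal_add hρ (mul_nonneg (sub_nonneg.mpr hρα) hp)]
        congr 2; ring

end ConditionalBound

lemma ENNReal.tsum_lt_top_of_le_mul_of_lt_one {u : ℕ → ℝ≥0∞} {c : ℝ≥0∞} (hc : c < 1)
    (h0 : u 0 < ⊤) (hu : ∀ k, u (k + 1) ≤ c * u k) : ∑' k, u k < ⊤ := by
  have hgeom : ∀ k, u k ≤ c ^ k * u 0 := by
    intro k
    induction k with
    | zero => simp
    | succ k ih =>
      calc u (k + 1) ≤ c * (c ^ k * u 0) := (hu k).trans (mul_le_mul_right ih c)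
        _ = c ^ (k + 1) * u 0 := by ring
  calc ∑' k, u k ≤ ∑' k, c ^ k * u 0 := ENNReal.tsum_le_tsum hgeom
    _ = (1 - c)⁻¹ * u 0 := by rw [ENNReal.tsum_mul_right, ENNReal.tsum_geometric]
    _ < ⊤ := ENNReal.mul_lt_top (ENNReal.inv_lt_top.mpr (tsub_pos_of_lt hc)) h0

section PastSigma

variable {Ω E ι : Type*} [MeasurableSpace E]
  (g : ℕ → Ω → ι) (A : ℕ → Ω → Bool) (x0 : Ω → E)

/-- The information available before the decision at step `k`: the processor states up to `k`,
the availability indicators before `k`, and the initial state. -/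
abbrev pastSigma (k : ℕ) : MeasurableSpace Ω :=
  (⨆ j ∈ Finset.range (k + 1), MeasurableSpace.comap (g j) ⊤) ⊔
    (⨆ j ∈ Finset.range k, MeasurableSpace.comap (A j) ⊤) ⊔
    MeasurableSpace.comap x0 inferInstance

lemma pastSigma_le [mΩ : MeasurableSpace Ω] [MeasurableSpace ι] [DiscreteMeasurableSpace ι]
    (hg : ∀ k, Measurable (g k)) (hA : ∀ k, Measurable (A k)) (hx0 : Measurable x0) (k : ℕ) :
    pastSigma g A x0 k ≤ mΩ := by
  refine sup_le (sup_le (iSup₂_le fun j _ => ?_) (iSup₂_le fun j _ => ?_)) hx0.comap_le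
  · rintro _ ⟨t, -, rfl⟩
    exact hg j MeasurableSet.of_discrete
  · rintro _ ⟨t, -, rfl⟩
    exact hA j MeasurableSet.of_discrete

lemma pastSigma_le_succ (k : ℕ) : pastSigma g A x0 k ≤ pastSigma g A x0 (k + 1) := by
  refine sup_le_sup (sup_le_sup ?_ ?_) le_rfl <;>
    exact biSup_mono fun j hj => Finset.mem_range.mpr (by rw [Finset.mem_range] at hj; omega)

lemma measurable_availability_pastSigma_succ (k : ℕ) :
    Measurable[pastSigma g A x0 (k + 1)] (A k) :=
  measurable_iff_comap_le.mpr <| (MeasurableSpace.comap_mono le_top).trans <|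
    (le_biSup (fun j => MeasurableSpace.comap (A j) ⊤)
      (Finset.mem_range_succ_iff.mpr le_rfl)).trans (le_sup_right.trans le_sup_left)

lemma measurable_switched_pastSigma {F₀ F₁ : E → E} (hF₀ : Measurable F₀)
    (hF₁ : Measurable F₁) {x : ℕ → Ω → E} (h0 : ∀ ω, x 0 ω = x0 ω)
    (hsucc : ∀ k ω, x (k + 1) ω = if A k ω = true then F₀ (x k ω) else F₁ (x k ω))
    (k : ℕ) :
    Measurable[pastSigma g A x0 k] (x k) := by
  induction k with
  | zero =>
    rw [funext h0]
    exact measurable_iff_comap_le.mpr le_sup_right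
  | succ k ih =>
    have hx : Measurable[pastSigma g A x0 (k + 1)] (x k) :=
      ih.mono (pastSigma_le_succ g A x0 k) le_rfl
    rw [funext (hsucc k)]
    exact Measurable.ite
      (measurable_availability_pastSigma_succ g A x0 k (measurableSet_singleton true))
      (hF₀.comp hx) (hF₁.comp hx)

end PastSigma

theorem stmt_12_general
    {n p' m G : ℕ}
    (f : EuclideanSpace ℝ (Fin n) → EuclideanSpace ℝ (Fin p') → EuclideanSpace ℝ (Fin m) →
      EuclideanSpace ℝ (Fin n))
    (hfmeas : Measurable fun q : EuclideanSpace ℝ (Fin n) × EuclideanSpace ℝ (Fin p') ×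
      EuclideanSpace ℝ (Fin m) => f q.1 q.2.1 q.2.2)
    (V : EuclideanSpace ℝ (Fin n) → ℝ) (hVmeas : Measurable V)
    (κ : EuclideanSpace ℝ (Fin n) → EuclideanSpace ℝ (Fin p')) (hκmeas : Measurable κ)
    -- Assumption 1: class-K∞ bounds and closed-loop contraction
    (φ₁ φ₂ : ℝ → ℝ)
    (ρ : ℝ) (hρ0 : 0 ≤ ρ) (hρ1 : ρ < 1)
    (hsandwich : ∀ x, φ₁ ‖x‖ ≤ V x ∧ V x ≤ φ₂ ‖x‖)
    (hcontract : ∀ x, V (f x (κ x) 0) ≤ ρ * V x)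
    -- probability space, Markov chain of processor states and availability indicators
    {Ω : Type*} [MeasurableSpace Ω] (μ : Measure Ω)
    (g : ℕ → Ω → Fin G) (hgmeas : ∀ k, Measurable (g k))
    (A : ℕ → Ω → Bool) (hAmeas : ∀ k, Measurable (A k))
    (x0 : Ω → EuclideanSpace ℝ (Fin n)) (hx0meas : Measurable x0)
    (p0g : Fin G → ℝ) (hp0g : ∀ ς, 0 ≤ p0g ς ∧ p0g ς ≤ 1)
    -- conditional unavailability probability given the processor state, independent of the past
    (hAcond : ∀ k (ς : Fin G) (S : Set Ω),
      MeasurableSet[(⨆ j ∈ Finset.range (k + 1), MeasurableSpace.comap (g j) ⊤) ⊔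
        (⨆ j ∈ Finset.range k, MeasurableSpace.comap (A j) ⊤) ⊔
        MeasurableSpace.comap x0 inferInstance] S →
      μ ({ω | A k ω = true} ∩ {ω | g k ω = ς} ∩ S)
        = ENNReal.ofReal (p0g ς) * μ ({ω | g k ω = ς} ∩ S))
    (hx0int : ∫⁻ ω, ENNReal.ofReal (φ₂ ‖x0 ω‖) ∂μ < ⊤)
    -- worst-case unavailability probability p̂₀ = max_ς p_{0|ς}
    (phat₀ : ℝ) (hphatub : ∀ ς, p0g ς ≤ phat₀) (hphatmem : ∃ ς, p0g ς = phat₀)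
    -- Assumption 3: open-loop growth bound with α ∈ [1, 1/p̂₀)
    (α : ℝ) (hα1 : 1 ≤ α)
    (hgrow : ∀ x, V (f x 0 0) ≤ α * V x)
    -- the closed-loop trajectory of the baseline algorithm
    (x : ℕ → Ω → EuclideanSpace ℝ (Fin n))
    (hxinit : ∀ ω, x 0 ω = x0 ω)
    (hxrec : ∀ k ω, x (k + 1) ω =
      if A k ω = true then f (x k ω) 0 0 else f (x k ω) (κ (x k ω)) 0)
    -- stability condition
    (hstab : phat₀ * α + (1 - phat₀) * ρ < 1) :
    ∑' k : ℕ, ∫⁻ ω, ENNReal.ofReal (φ₁ ‖x k ω‖) ∂μ < ⊤ := by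
  obtain ⟨ς₀, rfl⟩ := hphatmem
  have hx : ∀ k, Measurable[pastSigma g A x0 k] (x k) :=
    measurable_switched_pastSigma g A x0 (F₀ := fun y => f y 0 0) (F₁ := fun y => f y (κ y) 0)
      (hfmeas.comp (f := fun y => (y, 0, 0)) (by fun_prop))
      (hfmeas.comp (f := fun y => (y, κ y, 0)) (by fun_prop)) hxinit hxrec
  have hunavailable : ∀ k t, MeasurableSet[pastSigma g A x0 k] t →
      μ ({ω | A k ω = true} ∩ t) ≤ ENNReal.ofReal (p0g ς₀) * μ t := fun k t ht =>
    measure_inter_le_mul_of_forall_fiber (hgmeas k) fun ς =>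
      (hAcond k ς t ht).trans_le
        (mul_le_mul_left (ENNReal.ofReal_le_ofReal (hphatub ς)) _)
  have hstep : ∀ k, ∫⁻ ω, ENNReal.ofReal (V (x (k + 1) ω)) ∂μ ≤
      ENNReal.ofReal (p0g ς₀ * α + (1 - p0g ς₀) * ρ) *
        ∫⁻ ω, ENNReal.ofReal (V (x k ω)) ∂μ :=
    fun k => lintegral_le_of_switching (pastSigma_le g A x0 hgmeas hAmeas hx0meas k)
      (hAmeas k (measurableSet_singleton true)) (hp0g ς₀).1 hρ0 (by linarith) (hunavailable k)
      (hVmeas.comp (hx k)).ennreal_ofReal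
      (fun ω hω => by
        rw [hxrec, if_pos (show A k ω = true from hω), ← ENNReal.ofReal_mul (by linarith)]
        exact ENNReal.ofReal_le_ofReal (hgrow _))
      (fun ω hω => by
        rw [hxrec, if_neg (show ¬A k ω = true from hω), ← ENNReal.ofReal_mul hρ0]
        exact ENNReal.ofReal_le_ofReal (hcontract _))
  have hV0 : ∫⁻ ω, ENNReal.ofReal (V (x 0 ω)) ∂μ < ⊤ :=
    hx0int.trans_le' <| lintegral_mono fun ω => by
      rw [hxinit]; exact ENNReal.ofReal_le_ofReal (hsandwich _).2
  calc ∑' k, ∫⁻ ω, ENNReal.ofReal (φ₁ ‖x k ω‖) ∂μ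
      ≤ ∑' k, ∫⁻ ω, ENNReal.ofReal (V (x k ω)) ∂μ := ENNReal.tsum_le_tsum fun k =>
        lintegral_mono fun ω => ENNReal.ofReal_le_ofReal (hsandwich _).1
    _ < ⊤ := ENNReal.tsum_lt_top_of_le_mul_of_lt_one (ENNReal.ofReal_lt_one.mpr hstab) hV0 hstep

/-- Stochastic stability of the baseline algorithm with Markovian processor
availability (Theorem 4). The processor state `{g(k)}` is a Markov chain with transition
matrix `Q`; given `g(k) = ς` the processor is unavailable with probability `p_{0|ς}`,
independently of the past. With `p̂₀ = max_ς p_{0|ς}` and `α ∈ [1, 1/p̂₀)`, the condition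
`p̂₀α + (1−p̂₀)ρ < 1` implies `∑_{k=0}^∞ E[φ₁(|x(k)|)] < ∞`. -/
theorem stmt_12
    {n p' m G : ℕ}
    (f : EuclideanSpace ℝ (Fin n) → EuclideanSpace ℝ (Fin p') → EuclideanSpace ℝ (Fin m) →
      EuclideanSpace ℝ (Fin n))
    (hfmeas : Measurable fun q : EuclideanSpace ℝ (Fin n) × EuclideanSpace ℝ (Fin p') ×
      EuclideanSpace ℝ (Fin m) => f q.1 q.2.1 q.2.2)
    (hf0 : f 0 0 0 = 0)
    (V : EuclideanSpace ℝ (Fin n) → ℝ) (hVmeas : Measurable V) (hVnonneg : ∀ x, 0 ≤ V x)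
    (κ : EuclideanSpace ℝ (Fin n) → EuclideanSpace ℝ (Fin p')) (hκmeas : Measurable κ)
    -- Assumption 1: class-K∞ bounds and closed-loop contraction
    (φ₁ φ₂ : ℝ → ℝ)
    (hφ₁K : Continuous φ₁ ∧ φ₁ 0 = 0 ∧ StrictMonoOn φ₁ (Set.Ici 0) ∧ Tendsto φ₁ atTop atTop)
    (hφ₂K : Continuous φ₂ ∧ φ₂ 0 = 0 ∧ StrictMonoOn φ₂ (Set.Ici 0) ∧ Tendsto φ₂ atTop atTop)
    (ρ : ℝ) (hρ0 : 0 ≤ ρ) (hρ1 : ρ < 1)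
    (hsandwich : ∀ x, φ₁ ‖x‖ ≤ V x ∧ V x ≤ φ₂ ‖x‖)
    (hcontract : ∀ x, V (f x (κ x) 0) ≤ ρ * V x)
    -- probability space, Markov chain of processor states and availability indicators
    {Ω : Type*} [MeasurableSpace Ω] (μ : Measure Ω) [IsProbabilityMeasure μ]
    (g : ℕ → Ω → Fin G) (hgmeas : ∀ k, Measurable (g k))
    (A : ℕ → Ω → Bool) (hAmeas : ∀ k, Measurable (A k))
    (x0 : Ω → EuclideanSpace ℝ (Fin n)) (hx0meas : Measurable x0)
    (Q : Matrix (Fin G) (Fin G) ℝ)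
    (hQ0 : ∀ i j, 0 ≤ Q i j) (hQrow : ∀ i, ∑ j, Q i j = 1)
    (p0g : Fin G → ℝ) (hp0g : ∀ ς, 0 ≤ p0g ς ∧ p0g ς ≤ 1)
    -- Markov transition property of the chain (conditionally on the whole past)
    (hMarkov : ∀ k (ς ς' : Fin G) (S : Set Ω),
      MeasurableSet[(⨆ j ∈ Finset.range (k + 1), MeasurableSpace.comap (g j) ⊤) ⊔
        (⨆ j ∈ Finset.range (k + 1), MeasurableSpace.comap (A j) ⊤) ⊔
        MeasurableSpace.comap x0 inferInstance] S →
      μ ({ω | g (k + 1) ω = ς'} ∩ {ω | g k ω = ς} ∩ S)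
        = ENNReal.ofReal (Q ς ς') * μ ({ω | g k ω = ς} ∩ S))
    -- conditional unavailability probability given the processor state, independent of the past
    (hAcond : ∀ k (ς : Fin G) (S : Set Ω),
      MeasurableSet[(⨆ j ∈ Finset.range (k + 1), MeasurableSpace.comap (g j) ⊤) ⊔
        (⨆ j ∈ Finset.range k, MeasurableSpace.comap (A j) ⊤) ⊔
        MeasurableSpace.comap x0 inferInstance] S →
      μ ({ω | A k ω = true} ∩ {ω | g k ω = ς} ∩ S)
        = ENNReal.ofReal (p0g ς) * μ ({ω | g k ω = ς} ∩ S))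
    -- initial state independent of the chain and the availability process
    (hx0indep : IndepFun x0 (fun ω k => (g k ω, A k ω)) μ)
    (hx0int : ∫⁻ ω, ENNReal.ofReal (φ₂ ‖x0 ω‖) ∂μ < ⊤)
    -- worst-case unavailability probability p̂₀ = max_ς p_{0|ς}
    (phat₀ : ℝ) (hphatub : ∀ ς, p0g ς ≤ phat₀) (hphatmem : ∃ ς, p0g ς = phat₀)
    -- Assumption 3: open-loop growth bound with α ∈ [1, 1/p̂₀)
    (α : ℝ) (hα1 : 1 ≤ α) (hαp : phat₀ * α < 1)
    (hgrow : ∀ x, V (f x 0 0) ≤ α * V x)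
    -- the closed-loop trajectory of the baseline algorithm
    (x : ℕ → Ω → EuclideanSpace ℝ (Fin n))
    (hxinit : ∀ ω, x 0 ω = x0 ω)
    (hxrec : ∀ k ω, x (k + 1) ω =
      if A k ω = true then f (x k ω) 0 0 else f (x k ω) (κ (x k ω)) 0)
    -- stability condition
    (hstab : phat₀ * α + (1 - phat₀) * ρ < 1) :
    ∑' k : ℕ, ∫⁻ ω, ENNReal.ofReal (φ₁ ‖x k ω‖) ∂μ < ⊤ :=
  stmt_12_general f hfmeas V hVmeas κ hκmeas φ₁ φ₂ ρ hρ0 hρ1 hsandwich hcontract μ g hgmeas A hAmeas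
    x0 hx0meas p0g hp0g hAcond hx0int phat₀ hphatub hphatmem α hα1 hgrow x hxinit hxrec hstab
end

section
/- Let Q = (q_{ij}) be a G×G row-stochastic matrix with nonnegative entries, let p_{l|ς} ≥ 0 with ∑_{l=0}^{Λ} p_{l|ς} = 1 for each ς ∈ {1,…,G}, put p̂₀ := max_ς p_{0|ς}, and let ρ ∈ [0,1), α ≥ 1 satisfy α·p̂₀ < 1. Let q̄_ς be the ς-th row of Q, Q̄ := diag(p_{0|1},…,p_{0|G})·Q, and p̄ the column vector with entries 1 − p_{0|ς}. Then for every ς with p_{0|ς} < 1, ∑_{l=1}^{Λ} (p_{l|ς}/(1−p_{0|ς}))·∑_{j=1}^{∞} (q̄_ς·Q̄^{j−1}·p̄)·ρ^{min(l,j)}·α^{max(j−l,0)} ≤ Υ_ς, where Υ_ς := q̄_ς·(I−ρQ̄)^{−1}·(ρ·I + ((α−ρ)/(1−p_{0|ς}))·(I−αQ̄)^{−1}·∑_{l=1}^{Λ} p_{l|ς}·(ρQ̄)^{l})·p̄, and all the series involved converge absolutely. -/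
open Matrix

section Aux

attribute [local instance] Matrix.linftyOpNormedRing Matrix.linftyOpNormedAlgebra

private lemma aux_clm {G : ℕ} (q pb : Fin G → ℝ) (N : Matrix (Fin G) (Fin G) ℝ) :
    ∃ φ : Matrix (Fin G) (Fin G) ℝ →L[ℝ] ℝ,
      ∀ M : Matrix (Fin G) (Fin G) ℝ, φ M = q ⬝ᵥ ((M * N).mulVec pb) := by
  refine ⟨LinearMap.toContinuousLinearMap
    { toFun := fun M => q ⬝ᵥ ((M * N).mulVec pb)
      map_add' := ?_
      map_smul' := ?_ }, fun M => rfl⟩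
  · intro M M'; simp [add_mul, Matrix.add_mulVec, dotProduct_add]
  · intro c M
    simp [smul_mul_assoc, Matrix.smul_mulVec, dotProduct_smul, smul_eq_mul]

private lemma aux_geom {G : ℕ} (X : Matrix (Fin G) (Fin G) ℝ) (hX : ‖X‖ < 1) :
    HasSum (fun n => X ^ n) ((1 - X)⁻¹) ∧ (1 - X)⁻¹ * (1 - X) = 1 ∧
      (1 - X) * (1 - X)⁻¹ = 1 := by
  have hs := summable_geometric_of_norm_lt_one hX
  have h1 : (1 - X) * (∑' n, X ^ n) = 1 := mul_neg_geom_series X hX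
  have h2 : (∑' n, X ^ n) * (1 - X) = 1 := geom_series_mul_neg X hX
  have hinv : (1 - X)⁻¹ = ∑' n, X ^ n := Matrix.inv_eq_right_inv h1
  exact ⟨hinv ▸ hs.hasSum, hinv ▸ h2, hinv ▸ h1⟩

private lemma aux_norm {G : ℕ} (Qb : Matrix (Fin G) (Fin G) ℝ) (c0 : ℝ) (hc0 : 0 ≤ c0)
    (h : ∀ i, ∑ j, |Qb i j| ≤ c0) : ‖Qb‖ ≤ c0 := by
  rw [Matrix.linfty_opNorm_def]
  have : (Finset.univ : Finset (Fin G)).sup (fun i => ∑ j, ‖Qb i j‖₊) ≤ c0.toNNReal := by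
    refine Finset.sup_le fun i _ => ?_
    rw [← NNReal.coe_le_coe, Real.coe_toNNReal _ hc0]
    push_cast [coe_nnnorm, Real.norm_eq_abs]
    exact h i
  calc ((Finset.univ.sup fun i => ∑ j, ‖Qb i j‖₊ : NNReal) : ℝ)
      ≤ (c0.toNNReal : ℝ) := by exact_mod_cast this
    _ = c0 := Real.coe_toNNReal _ hc0

/-- Conditional Lyapunov contraction bound `Υ_ς` (Lemma 4).
With `Q` row-stochastic, conditional probabilities `p_{l|ς}`, `p̂₀ = max_ς p_{0|ς}`,
`ρ ∈ [0,1)`, `α ≥ 1`, `α p̂₀ < 1`, `Q̄ = diag(p_{0|1},…,p_{0|G})Q` and `p̄_ς = 1 − p_{0|ς}`: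
for every `ς` with `p_{0|ς} < 1`, the series
`∑_{l=1}^{Λ} (p_{l|ς}/(1−p_{0|ς})) ∑_{j=1}^{∞} (q̄_ς Q̄^{j−1} p̄) ρ^{min(l,j)} α^{max(j−l,0)}`
(reindexed by `j = m+1`) converges absolutely and is bounded above by
`Υ_ς = q̄_ς (I−ρQ̄)⁻¹ (ρI + ((α−ρ)/(1−p_{0|ς}))(I−αQ̄)⁻¹ ∑_{l=1}^{Λ} p_{l|ς}(ρQ̄)^l) p̄`. -/
theorem stmt_16
    {G : ℕ} (Λ : ℕ) (Q : Matrix (Fin G) (Fin G) ℝ)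
    (p : ℕ → Fin G → ℝ) (phat₀ ρ α : ℝ)
    (hQ0 : ∀ i j, 0 ≤ Q i j) (hQrow : ∀ i, ∑ j, Q i j = 1)
    (hp0 : ∀ l ς, 0 ≤ p l ς)
    (hpsum : ∀ ς, ∑ l ∈ Finset.range (Λ + 1), p l ς = 1)
    (hphat : ∀ ς, p 0 ς ≤ phat₀) (hphatmem : ∃ ς, p 0 ς = phat₀)
    (hρ0 : 0 ≤ ρ) (hρ1 : ρ < 1) (hα : 1 ≤ α) (hαp : α * phat₀ < 1) :
    ∀ ς : Fin G, p 0 ς < 1 →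
      (∀ l ∈ Finset.Icc 1 Λ,
        Summable (fun m : ℕ =>
          (Q ς ⬝ᵥ (((Matrix.diagonal (fun τ => p 0 τ) * Q) ^ m).mulVec
              (fun τ => 1 - p 0 τ)))
            * ρ ^ (min l (m + 1)) * α ^ (m + 1 - l))) ∧
      (∑ l ∈ Finset.Icc 1 Λ, (p l ς / (1 - p 0 ς)) *
          ∑' m : ℕ,
            (Q ς ⬝ᵥ (((Matrix.diagonal (fun τ => p 0 τ) * Q) ^ m).mulVec
                (fun τ => 1 - p 0 τ)))
              * ρ ^ (min l (m + 1)) * α ^ (m + 1 - l))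
        ≤ Q ς ⬝ᵥ
            (((1 - ρ • (Matrix.diagonal (fun τ => p 0 τ) * Q))⁻¹ *
                (ρ • (1 : Matrix (Fin G) (Fin G) ℝ) +
                  ((α - ρ) / (1 - p 0 ς)) •
                    ((1 - α • (Matrix.diagonal (fun τ => p 0 τ) * Q))⁻¹ *
                      ∑ l ∈ Finset.Icc 1 Λ,
                        p l ς • (ρ • (Matrix.diagonal (fun τ => p 0 τ) * Q)) ^ l))).mulVec
              (fun τ => 1 - p 0 τ)) := by
  classical
  obtain ⟨σ₀, hσ₀⟩ := hphatmem
  have hph0 : 0 ≤ phat₀ := hσ₀ ▸ hp0 0 σ₀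
  have hα0 : (0:ℝ) ≤ α := le_trans zero_le_one hα
  have hph1 : phat₀ < 1 := by nlinarith
  intro ς hς
  set Qb := Matrix.diagonal (fun τ => p 0 τ) * Q with hQbeq
  set pb : Fin G → ℝ := fun τ => 1 - p 0 τ with hpbeq
  set X := ρ • Qb with hXeq
  set Y := α • Qb with hYeq
  -- norm bound on Qb
  have hQbn : ‖Qb‖ ≤ phat₀ := by
    refine aux_norm Qb phat₀ hph0 fun i => ?_
    have he : ∀ j, Qb i j = p 0 i * Q i j := fun j => by
      rw [hQbeq, Matrix.diagonal_mul]
    calc ∑ j, |Qb i j| = ∑ j, p 0 i * Q i j := by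
          refine Finset.sum_congr rfl fun j _ => ?_
          rw [he j, abs_of_nonneg (mul_nonneg (hp0 0 i) (hQ0 i j))]
      _ = p 0 i * ∑ j, Q i j := by rw [Finset.mul_sum]
      _ = p 0 i := by rw [hQrow i, mul_one]
      _ ≤ phat₀ := hphat i
  have hXn : ‖X‖ < 1 := by
    rw [hXeq, norm_smul, Real.norm_eq_abs, abs_of_nonneg hρ0]
    calc ρ * ‖Qb‖ ≤ ρ * phat₀ := mul_le_mul_of_nonneg_left hQbn hρ0
      _ ≤ α * phat₀ := mul_le_mul_of_nonneg_right (le_trans hρ1.le hα) hph0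
      _ < 1 := hαp
  have hYn : ‖Y‖ < 1 := by
    rw [hYeq, norm_smul, Real.norm_eq_abs, abs_of_nonneg hα0]
    calc α * ‖Qb‖ ≤ α * phat₀ := mul_le_mul_of_nonneg_left hQbn hα0
      _ < 1 := hαp
  obtain ⟨hXsum, hXl, hXr⟩ := aux_geom X hXn
  obtain ⟨hYsum, hYl, hYr⟩ := aux_geom Y hYn
  obtain ⟨φ, hφ0⟩ := aux_clm (Q ς) pb 1
  have hφ1 : ∀ M, φ M = Q ς ⬝ᵥ M.mulVec pb := fun M => by rw [hφ0, mul_one]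
  -- shifted geometric scalar series
  have hfα : ∀ l : ℕ, HasSum (fun k => α ^ k * (Q ς ⬝ᵥ ((Qb ^ (k + l)).mulVec pb)))
      (Q ς ⬝ᵥ (((1 - Y)⁻¹ * Qb ^ l).mulVec pb)) := by
    intro l
    obtain ⟨ψ, hψ⟩ := aux_clm (Q ς) pb (Qb ^ l)
    have h := hYsum.mapL ψ
    have hfun : ∀ b : ℕ, ψ (Y ^ b) = α ^ b * (Q ς ⬝ᵥ ((Qb ^ (b + l)).mulVec pb)) := by
      intro b
      rw [hYeq, smul_pow, _root_.map_smul, smul_eq_mul, hψ, ← pow_add]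
    simp only [hfun, hψ] at h
    exact h
  -- resolvent identity
  have hA1 : ∀ M : Matrix (Fin G) (Fin G) ℝ, (1 - X)⁻¹ * ((1 - X) * M) = M := by
    intro M; rw [← mul_assoc, hXl, one_mul]
  have hres : α • (1 - Y)⁻¹ - ρ • (1 - X)⁻¹ = (α - ρ) • ((1 - X)⁻¹ * (1 - Y)⁻¹) := by
    have hcen : α • (1 - X) - ρ • (1 - Y) = (α - ρ) • (1 : Matrix (Fin G) (Fin G) ℝ) := by
      rw [hXeq, hYeq]; module
    have e1 : (1 - X)⁻¹ * (α • (1 - X) - ρ • (1 - Y)) * (1 - Y)⁻¹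
        = α • (1 - Y)⁻¹ - ρ • (1 - X)⁻¹ := by
      have t1 : (1 - X)⁻¹ * (α • (1 - X)) * (1 - Y)⁻¹ = α • (1 - Y)⁻¹ := by
        rw [mul_smul_comm, hXl, smul_mul_assoc, one_mul]
      have t2 : (1 - X)⁻¹ * (ρ • (1 - Y)) * (1 - Y)⁻¹ = ρ • (1 - X)⁻¹ := by
        rw [mul_smul_comm, smul_mul_assoc, mul_assoc, hYr, mul_one]
      rw [mul_sub, sub_mul, t1, t2]
    rw [← e1, hcen]
    simp only [smul_mul_assoc, mul_smul_comm, one_mul, mul_one]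
  -- the key HasSum for each l
  have key : ∀ l ∈ Finset.Icc 1 Λ,
      HasSum (fun m : ℕ => (Q ς ⬝ᵥ ((Qb ^ m).mulVec pb)) * ρ ^ (min l (m + 1)) * α ^ (m + 1 - l))
        (ρ * φ (1 - X)⁻¹ + (α - ρ) * φ ((1 - X)⁻¹ * (1 - Y)⁻¹ * X ^ l)) := by
    intro l _
    have h1 : HasSum (fun k : ℕ =>
          (Q ς ⬝ᵥ ((Qb ^ (k + l)).mulVec pb)) * ρ ^ (min l (k + l + 1)) * α ^ (k + l + 1 - l))
        ((ρ ^ l * α) * (Q ς ⬝ᵥ (((1 - Y)⁻¹ * Qb ^ l).mulVec pb))) := by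
      have h := (hfα l).mul_left (ρ ^ l * α)
      have hfun : ∀ k : ℕ,
          (ρ ^ l * α) * (α ^ k * (Q ς ⬝ᵥ ((Qb ^ (k + l)).mulVec pb)))
            = (Q ς ⬝ᵥ ((Qb ^ (k + l)).mulVec pb)) * ρ ^ (min l (k + l + 1)) * α ^ (k + l + 1 - l) := by
        intro k
        have e1 : min l (k + l + 1) = l := min_eq_left (by omega)
        have e2 : k + l + 1 - l = k + 1 := by omega
        rw [e1, e2, pow_succ]; ring
      simpa only [hfun] using h
    have h2 := (hasSum_nat_add_iff
      (f := fun m : ℕ => (Q ς ⬝ᵥ ((Qb ^ m).mulVec pb)) * ρ ^ (min l (m + 1)) * α ^ (m + 1 - l))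
      l).mp h1
    have hφpow : ∀ m : ℕ, φ (X ^ m) = ρ ^ m * (Q ς ⬝ᵥ ((Qb ^ m).mulVec pb)) := by
      intro m; rw [hXeq, smul_pow, _root_.map_smul, smul_eq_mul, hφ1]
    have hfin : ∑ m ∈ Finset.range l,
        (Q ς ⬝ᵥ ((Qb ^ m).mulVec pb)) * ρ ^ (min l (m + 1)) * α ^ (m + 1 - l)
          = ρ * φ ((1 - X)⁻¹ * (1 - X ^ l)) := by
      have hstep : ∀ m ∈ Finset.range l,
          (Q ς ⬝ᵥ ((Qb ^ m).mulVec pb)) * ρ ^ (min l (m + 1)) * α ^ (m + 1 - l)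
            = ρ * φ (X ^ m) := by
        intro m hm
        rw [Finset.mem_range] at hm
        have e1 : min l (m + 1) = m + 1 := min_eq_right (by omega)
        have e2 : m + 1 - l = 0 := by omega
        rw [e1, e2, pow_zero, mul_one, hφpow, pow_succ]; ring
      rw [Finset.sum_congr rfl hstep, ← Finset.mul_sum, ← map_sum]
      have hg : (1 - X) * ∑ m ∈ Finset.range l, X ^ m = 1 - X ^ l := by
        have h := mul_geom_sum X l
        have : (1 - X) * ∑ m ∈ Finset.range l, X ^ m
            = -((X - 1) * ∑ m ∈ Finset.range l, X ^ m) := by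
          rw [← neg_mul, neg_sub]
        rw [this, h, neg_sub]
      have hgs : ∑ m ∈ Finset.range l, X ^ m = (1 - X)⁻¹ * (1 - X ^ l) := by
        rw [← hg, ← mul_assoc, hXl, one_mul]
      rw [hgs]
    rw [hfin] at h2
    have e2 : φ ((1 - Y)⁻¹ * X ^ l) = ρ ^ l * (Q ς ⬝ᵥ (((1 - Y)⁻¹ * Qb ^ l).mulVec pb)) := by
      rw [hXeq, smul_pow, mul_smul_comm, _root_.map_smul, smul_eq_mul, hφ1]
    have e3 : α * φ ((1 - Y)⁻¹ * X ^ l) - ρ * φ ((1 - X)⁻¹ * X ^ l)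
        = (α - ρ) * φ ((1 - X)⁻¹ * (1 - Y)⁻¹ * X ^ l) := by
      have hm : α • ((1 - Y)⁻¹ * X ^ l) - ρ • ((1 - X)⁻¹ * X ^ l)
          = ((α - ρ) • ((1 - X)⁻¹ * (1 - Y)⁻¹)) * X ^ l := by
        rw [← hres, sub_mul, smul_mul_assoc, smul_mul_assoc]
      calc α * φ ((1 - Y)⁻¹ * X ^ l) - ρ * φ ((1 - X)⁻¹ * X ^ l)
          = φ (α • ((1 - Y)⁻¹ * X ^ l) - ρ • ((1 - X)⁻¹ * X ^ l)) := by
            simp only [map_sub, _root_.map_smul, smul_eq_mul]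
        _ = φ (((α - ρ) • ((1 - X)⁻¹ * (1 - Y)⁻¹)) * X ^ l) := by rw [hm]
        _ = (α - ρ) * φ ((1 - X)⁻¹ * (1 - Y)⁻¹ * X ^ l) := by
            rw [smul_mul_assoc, _root_.map_smul, smul_eq_mul]
    have e1 : φ ((1 - X)⁻¹ * (1 - X ^ l)) = φ (1 - X)⁻¹ - φ ((1 - X)⁻¹ * X ^ l) := by
      rw [mul_sub, mul_one, map_sub]
    have hval : (ρ ^ l * α) * (Q ς ⬝ᵥ (((1 - Y)⁻¹ * Qb ^ l).mulVec pb))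
        + ρ * φ ((1 - X)⁻¹ * (1 - X ^ l))
        = ρ * φ (1 - X)⁻¹ + (α - ρ) * φ ((1 - X)⁻¹ * (1 - Y)⁻¹ * X ^ l) := by
      rw [e1]
      linear_combination e3 - α * e2
    rw [hval] at h2
    exact h2
  refine ⟨fun l hl => (key l hl).summable, ?_⟩
  -- sum of conditional probabilities
  have hd : (0:ℝ) < 1 - p 0 ς := by linarith
  have hdne : (1 - p 0 ς) ≠ 0 := ne_of_gt hd
  have hpsum' : ∑ l ∈ Finset.Icc 1 Λ, p l ς = 1 - p 0 ς := by
    have hset : Finset.Icc 1 Λ = (Finset.range (Λ + 1)).erase 0 := by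
      ext x
      simp only [Finset.mem_Icc, Finset.mem_erase, Finset.mem_range]
      omega
    have h0 : (0:ℕ) ∈ Finset.range (Λ + 1) := by simp
    have h := Finset.add_sum_erase (Finset.range (Λ + 1)) (fun l => p l ς) h0
    rw [hpsum ς] at h
    rw [hset]
    linarith
  -- rewrite LHS using tsum values
  have hLHS : ∑ l ∈ Finset.Icc 1 Λ, (p l ς / (1 - p 0 ς)) *
      ∑' m : ℕ, (Q ς ⬝ᵥ ((Qb ^ m).mulVec pb)) * ρ ^ (min l (m + 1)) * α ^ (m + 1 - l)
      = ∑ l ∈ Finset.Icc 1 Λ, (p l ς / (1 - p 0 ς)) *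
        (ρ * φ (1 - X)⁻¹ + (α - ρ) * φ ((1 - X)⁻¹ * (1 - Y)⁻¹ * X ^ l)) := by
    refine Finset.sum_congr rfl fun l hl => ?_
    rw [(key l hl).tsum_eq]
  rw [hLHS]
  refine le_of_eq ?_
  -- expand the RHS matrix expression
  have hm : (1 - X)⁻¹ * (ρ • (1 : Matrix (Fin G) (Fin G) ℝ)
        + ((α - ρ) / (1 - p 0 ς)) • ((1 - Y)⁻¹ * ∑ l ∈ Finset.Icc 1 Λ, p l ς • X ^ l))
      = ρ • (1 - X)⁻¹ + ((α - ρ) / (1 - p 0 ς)) •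
          ∑ l ∈ Finset.Icc 1 Λ, p l ς • ((1 - X)⁻¹ * (1 - Y)⁻¹ * X ^ l) := by
    have hs1 : (1 - Y)⁻¹ * ∑ l ∈ Finset.Icc 1 Λ, p l ς • X ^ l
        = ∑ l ∈ Finset.Icc 1 Λ, p l ς • ((1 - Y)⁻¹ * X ^ l) := by
      rw [Finset.mul_sum]
      exact Finset.sum_congr rfl fun l _ => mul_smul_comm _ _ _
    have hs2 : (1 - X)⁻¹ * ∑ l ∈ Finset.Icc 1 Λ, p l ς • ((1 - Y)⁻¹ * X ^ l)
        = ∑ l ∈ Finset.Icc 1 Λ, p l ς • ((1 - X)⁻¹ * (1 - Y)⁻¹ * X ^ l) := by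
      rw [Finset.mul_sum]
      refine Finset.sum_congr rfl fun l _ => ?_
      rw [mul_smul_comm, mul_assoc]
    rw [mul_add, mul_smul_comm, mul_one, mul_smul_comm, hs1, hs2]
  have hRHS : Q ς ⬝ᵥ (((1 - X)⁻¹ * (ρ • (1 : Matrix (Fin G) (Fin G) ℝ)
        + ((α - ρ) / (1 - p 0 ς)) • ((1 - Y)⁻¹ * ∑ l ∈ Finset.Icc 1 Λ, p l ς • X ^ l))).mulVec pb)
      = ρ * φ (1 - X)⁻¹ + ((α - ρ) / (1 - p 0 ς)) *
          ∑ l ∈ Finset.Icc 1 Λ, p l ς * φ ((1 - X)⁻¹ * (1 - Y)⁻¹ * X ^ l) := by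
    rw [← hφ1, hm, map_add, _root_.map_smul, _root_.map_smul, map_sum]
    simp only [_root_.map_smul, smul_eq_mul]
  rw [hRHS]
  -- final scalar computation
  calc ∑ l ∈ Finset.Icc 1 Λ, (p l ς / (1 - p 0 ς)) *
        (ρ * φ (1 - X)⁻¹ + (α - ρ) * φ ((1 - X)⁻¹ * (1 - Y)⁻¹ * X ^ l))
      = ∑ l ∈ Finset.Icc 1 Λ, ((p l ς / (1 - p 0 ς)) * (ρ * φ (1 - X)⁻¹)
          + ((α - ρ) / (1 - p 0 ς)) * (p l ς * φ ((1 - X)⁻¹ * (1 - Y)⁻¹ * X ^ l))) := by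
        refine Finset.sum_congr rfl fun l _ => ?_
        ring
    _ = (∑ l ∈ Finset.Icc 1 Λ, p l ς) / (1 - p 0 ς) * (ρ * φ (1 - X)⁻¹)
          + ((α - ρ) / (1 - p 0 ς)) *
            ∑ l ∈ Finset.Icc 1 Λ, p l ς * φ ((1 - X)⁻¹ * (1 - Y)⁻¹ * X ^ l) := by
        rw [Finset.sum_add_distrib, ← Finset.sum_mul, ← Finset.sum_div, ← Finset.mul_sum]
    _ = ρ * φ (1 - X)⁻¹ + ((α - ρ) / (1 - p 0 ς)) *
          ∑ l ∈ Finset.Icc 1 Λ, p l ς * φ ((1 - X)⁻¹ * (1 - Y)⁻¹ * X ^ l) := by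
        rw [hpsum', div_self hdne, one_mul]

end Aux
end
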